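/- arXiv:1202.4623 — 8 statements merged into one kernel-verified Lean document; each statement's English description precedes it below -/
import Mathlib

section
/- For every integer n ≥ 1, the sum over all integers j with j ≠ n and j ≠ −n of 1/|n² − j²| is strictly less than 2·log(6n)/n. -/
/-!
By partial fractions, `1 / (n² - k²) = (1 / (n - k) + 1 / (n + k)) / (2n)`. For `0 ≤ k < n` these
terms add up to `(H_{2n} + 1/(2n)) / (2n)`, and for `k > n` they telescope to at most
`H_{2n} / (2n)`. The summand is even in `j`, so the sum over `ℤ` is twice the sum over `ℕ` minus
the term `1 / n²` at `j = 0`, hence at most `(2 H_{2n} - 1/(2n)) / n`. Finally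
`H_{2n} ≤ 1 + log (2n) < log 3 + log (2n) = log (6n)`.
-/

open Finset Real

lemma one_div_abs_sq_sub_sq_of_lt {x y : ℝ} (hy : 0 ≤ y) (hxy : y < x) :
    1 / |x ^ 2 - y ^ 2| = (1 / (x - y) + 1 / (x + y)) / (2 * x) := by
  have h₁ : 0 < x - y := by linarith
  have h₂ : 0 < x + y := by linarith
  rw [abs_of_pos (by nlinarith), div_add_div _ _ h₁.ne' h₂.ne', div_div,
    div_eq_div_iff (by nlinarith) (mul_pos (mul_pos h₁ h₂) (by linarith)).ne']
  ring

lemma one_div_abs_sq_sub_sq_of_gt {x y : ℝ} (hx : 0 < x) (hxy : x < y) :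
    1 / |x ^ 2 - y ^ 2| = (1 / (y - x) - 1 / (y + x)) / (2 * x) := by
  have h₁ : 0 < y - x := by linarith
  have h₂ : 0 < y + x := by linarith
  rw [abs_of_neg (by nlinarith), div_sub_div _ _ h₁.ne' h₂.ne', div_div,
    div_eq_div_iff (by nlinarith) (mul_pos (mul_pos h₁ h₂) (by linarith)).ne']
  ring

lemma cast_harmonic (n : ℕ) : (harmonic n : ℝ) = ∑ i ∈ range n, 1 / ((i : ℝ) + 1) := by
  simp [harmonic]

lemma sum_range_one_div_sub_add_one_div_add (n : ℕ) :
    ∑ k ∈ range n, (1 / ((n : ℝ) - k) + 1 / ((n : ℝ) + k)) =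
      harmonic (2 * n) + 1 / (2 * n) := by
  have reflect : ∑ k ∈ range n, 1 / ((n : ℝ) - k) = ∑ i ∈ range n, 1 / ((i : ℝ) + 1) := by
    rw [← sum_range_reflect]
    refine sum_congr rfl fun k hk => ?_
    have h : ((n - 1 - k : ℕ) : ℝ) + k + 1 = n := by
      exact_mod_cast (by simp at hk; omega : n - 1 - k + k + 1 = n)
    rw [← h]
    ring_nf
  have shift := (sum_range_succ (fun k : ℕ => 1 / ((n : ℝ) + k)) n).symm.trans
    (sum_range_succ' (fun k : ℕ => 1 / ((n : ℝ) + k)) n)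
  have split : (harmonic (2 * n) : ℝ) =
      ∑ i ∈ range n, 1 / ((i : ℝ) + 1) + ∑ k ∈ range n, 1 / ((n : ℝ) + (k + 1 : ℕ)) := by
    rw [cast_harmonic, two_mul, sum_range_add]
    push_cast
    ring_nf
  have double : 1 / ((n : ℝ) + n) = 1 / (2 * n) := by ring_nf
  have half : 1 / (n : ℝ) = 2 * (1 / (2 * n)) := by ring_nf
  rw [sum_add_distrib, reflect, split]
  simp only [double, Nat.cast_zero, add_zero] at shift
  linarith

lemma sum_range_one_div_add_one_sub_le_harmonic (c L : ℕ) :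
    ∑ m ∈ range L, (1 / ((m : ℝ) + 1) - 1 / ((m : ℝ) + 1 + c)) ≤ harmonic c := by
  have h₁ := cast_harmonic (L + c)
  have h₂ := cast_harmonic (c + L)
  rw [sum_range_add] at h₁ h₂
  rw [add_comm, h₂, ← cast_harmonic] at h₁
  have hpos : 0 ≤ ∑ i ∈ range c, 1 / ((L + i : ℕ) + 1 : ℝ) := sum_nonneg fun _ _ => by positivity
  have reorder :
      ∑ m ∈ range L, 1 / ((m : ℝ) + 1 + c) = ∑ m ∈ range L, 1 / ((c + m : ℕ) + 1 : ℝ) := by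
    refine sum_congr rfl fun m _ => ?_
    push_cast
    ring_nf
  rw [sum_sub_distrib, reorder]
  linarith

lemma sum_range_one_div_abs_sq_sub_sq (n : ℕ) :
    ∑ k ∈ range n, 1 / |(n : ℝ) ^ 2 - (k : ℝ) ^ 2| =
      (harmonic (2 * n) + 1 / (2 * n)) / (2 * n) := by
  rw [← sum_range_one_div_sub_add_one_div_add, sum_div]
  refine sum_congr rfl fun k hk => one_div_abs_sq_sub_sq_of_lt (by positivity) ?_
  exact_mod_cast mem_range.1 hk

lemma sum_range_one_div_abs_sq_sub_sq_add_le {n : ℕ} (hn : 0 < n) (L : ℕ) :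
    ∑ m ∈ range L, 1 / |(n : ℝ) ^ 2 - ((n + 1 + m : ℕ) : ℝ) ^ 2| ≤
      harmonic (2 * n) / (2 * n) := by
  have partial_fractions : ∀ m : ℕ, 1 / |(n : ℝ) ^ 2 - ((n + 1 + m : ℕ) : ℝ) ^ 2| =
      (1 / ((m : ℝ) + 1) - 1 / ((m : ℝ) + 1 + (2 * n : ℕ))) / (2 * n) := by
    intro m
    rw [one_div_abs_sq_sub_sq_of_gt (by positivity) (by push_cast; linarith)]
    push_cast
    ring_nf
  simp only [partial_fractions, ← sum_div]
  gcongr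
  exact sum_range_one_div_add_one_sub_le_harmonic _ _

lemma sum_range_one_div_abs_sq_sub_sq_le {n : ℕ} (hn : 0 < n) (M : ℕ) :
    ∑ k ∈ range M, 1 / |(n : ℝ) ^ 2 - (k : ℝ) ^ 2| ≤
      (2 * harmonic (2 * n) + 1 / (2 * n)) / (2 * n) :=
  calc ∑ k ∈ range M, 1 / |(n : ℝ) ^ 2 - (k : ℝ) ^ 2|
      ≤ ∑ k ∈ range (n + 1 + M), 1 / |(n : ℝ) ^ 2 - (k : ℝ) ^ 2| :=
        sum_le_sum_of_subset_of_nonneg (range_subset_range.2 (by omega))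
          fun _ _ _ => by positivity
    _ = (harmonic (2 * n) + 1 / (2 * n)) / (2 * n) +
          ∑ m ∈ range M, 1 / |(n : ℝ) ^ 2 - ((n + 1 + m : ℕ) : ℝ) ^ 2| := by
        rw [sum_range_add, sum_range_succ, sum_range_one_div_abs_sq_sub_sq, sub_self, abs_zero,
          div_zero, add_zero]
    _ ≤ (harmonic (2 * n) + 1 / (2 * n)) / (2 * n) + harmonic (2 * n) / (2 * n) := by
        gcongr
        exact sum_range_one_div_abs_sq_sub_sq_add_le hn M
    _ = (2 * harmonic (2 * n) + 1 / (2 * n)) / (2 * n) := by ring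

lemma HasSum.of_nat_of_even {G : Type*} [AddCommGroup G] [TopologicalSpace G]
    [IsTopologicalAddGroup G] {f : ℤ → G} {g : G} (hf : f.Even)
    (h : HasSum (fun n : ℕ => f n) g) : HasSum f (g + g - f 0) :=
  h.of_nat_of_neg (by simpa only [hf _] using h)

lemma harmonic_two_mul_lt_log_six_mul {n : ℕ} (hn : 0 < n) :
    (harmonic (2 * n) : ℝ) < log (6 * n) := by
  have log_three : 1 < log 3 := by
    rw [lt_log_iff_exp_lt (by norm_num)]
    linarith [exp_one_lt_d9]
  have log_six_mul : log (6 * n) = log 3 + log (2 * n) := by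
    rw [← log_mul (by norm_num) (by positivity)]
    ring_nf
  have := harmonic_le_one_add_log (2 * n)
  push_cast at this
  linarith

/-- For every integer `n ≥ 1`, the sum over all integers `j ≠ ±n` of `1/|n² - j²|`
is strictly less than `2 log(6n) / n`. -/
theorem mathieu_stmt_0 (n : ℕ) (hn : 1 ≤ n) :
    Summable (fun j : {j : ℤ // j ≠ (n : ℤ) ∧ j ≠ -(n : ℤ)} =>
      1 / |(n : ℝ) ^ 2 - ((j : ℤ) : ℝ) ^ 2|) ∧
    ∑' j : {j : ℤ // j ≠ (n : ℤ) ∧ j ≠ -(n : ℤ)}, 1 / |(n : ℝ) ^ 2 - ((j : ℤ) : ℝ) ^ 2|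
      < 2 * Real.log (6 * n) / n := by
  set f : ℤ → ℝ := fun j => 1 / |(n : ℝ) ^ 2 - (j : ℝ) ^ 2|
  have partial_sums (M : ℕ) : ∑ k ∈ range M, f k ≤
      (2 * harmonic (2 * n) + 1 / (2 * n)) / (2 * n) := by
    simpa only [f, Int.cast_natCast] using sum_range_one_div_abs_sq_sub_sq_le hn M
  have f_nonneg (k : ℕ) : 0 ≤ f k := by positivity
  have hasSum := (summable_of_sum_range_le f_nonneg partial_sums).hasSum
    |>.of_nat_of_even (f := f) fun j => by simp [f]
  -- The excluded terms `j = ±n` are `1 / 0 = 0` in `f`.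
  have support : Function.support f ⊆ {j | j ≠ n ∧ j ≠ -n} := by
    intro j hj
    constructor <;> rintro rfl <;> simp [f] at hj
  refine ⟨hasSum.summable.subtype _, ?_⟩
  refine (tsum_subtype_eq_of_support_subset support).trans_lt ?_
  rw [hasSum.tsum_eq]
  have tsum_le := Real.tsum_le_of_sum_range_le f_nonneg partial_sums
  have f_zero : f 0 = 1 / (n : ℝ) ^ 2 := by simp [f]
  calc ∑' k : ℕ, f k + ∑' k : ℕ, f k - f 0
      ≤ 2 * ((2 * (harmonic (2 * n) : ℝ) + 1 / (2 * n)) / (2 * n)) - 1 / (n : ℝ) ^ 2 := by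
        rw [f_zero]; linarith
    _ = (2 * (harmonic (2 * n) : ℝ) - 1 / (2 * n)) / n := by field_simp; ring
    _ < 2 * log (6 * n) / n := by
        gcongr
        linarith [harmonic_two_mul_lt_log_six_mul hn, (by positivity : (0 : ℝ) < 1 / (2 * n))]
end

section
/- For every integer n ≥ 2, every integer ν ≥ 1, and every z ∈ ℂ with |z| ≤ 1, the sum over all ν-tuples (j₁,…,j_ν) ∈ (ℤ ∖ {n, −n})^ν of ∏_{s=1}^ν 1/|n² − j_s² + z| is strictly less than (4·log(6n)/n)^ν. -/
/-!
Since `|n² - j²| ≥ 2n - 1 ≥ 3`, each factor is at most `2 / |n² - j²|`, and the sum over tuples is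
the `ν`-th power of the one-variable sum, which is therefore at most `2 ∑_{j ∈ ℤ} 1/|n² - j²|`.
Partial fractions, `1/(n² - k²) = (1/(n - k) + 1/(n + k)) / (2n)` for `k < n` and a telescoping
sum `∑_{i ≥ 1} (1/i - 1/(i + 2n)) = H_{2n}` for `k > n`, bound that sum by `2 H_{2n} / n`; finally
`H_{2n} ≤ 1 + log (2n) < log (6n)` because `e < 3`.
-/

open Finset Real

lemma hasSum_prod_pi_fin_of_nonneg {ι : Type*} {f : ι → ℝ} (hf0 : 0 ≤ f) (hf : Summable f)
    (ν : ℕ) : HasSum (fun j : Fin ν → ι => ∏ s, f (j s)) ((∑' i, f i) ^ ν) := by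
  induction ν with
  | zero => simp
  | succ ν ih =>
    have hg0 : 0 ≤ fun j : Fin ν → ι => ∏ s, f (j s) := fun j => prod_nonneg fun s _ => hf0 (j s)
    have hs := hf.mul_of_nonneg ih.summable hf0 hg0
    have hprod := HasSum.mul (f := f) (g := fun j : Fin ν → ι => ∏ s, f (j s)) hf.hasSum ih hs
    have hcons : (fun j : Fin (ν + 1) → ι => ∏ s, f (j s)) ∘ Fin.consEquiv (fun _ => ι) =
        fun x => f x.1 * ∏ s, f (x.2 s) := by
      funext x
      simp [Fin.prod_univ_succ]
    rwa [← (Fin.consEquiv fun _ => ι).hasSum_iff, pow_succ', hcons]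

lemma one_div_norm_add_le_two_div_norm {E : Type*} [SeminormedAddCommGroup E] {w z : E}
    (h : 2 * ‖z‖ ≤ ‖w‖) : 1 / ‖w + z‖ ≤ 2 / ‖w‖ := by
  have hlow : ‖w‖ ≤ ‖w + z‖ + ‖z‖ := by simpa using norm_sub_le (w + z) z
  rcases (norm_nonneg w).eq_or_lt with hw | hw
  · have : ‖w + z‖ = 0 := by linarith [norm_add_le w z, norm_nonneg (w + z), norm_nonneg z]
    simp [this, ← hw]
  · calc 1 / ‖w + z‖ ≤ 1 / (‖w‖ / 2) := one_div_le_one_div_of_le (by positivity) (by linarith)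
      _ = 2 / ‖w‖ := one_div_div _ _

lemma two_mul_abs_sub_one_le_abs_sq_sub_sq {a b : ℤ} (hab : b ≠ a) (hab' : b ≠ -a) :
    2 * |a| - 1 ≤ |a ^ 2 - b ^ 2| := by
  have h₁ : 1 ≤ |a - b| := Int.one_le_abs (sub_ne_zero.2 hab.symm)
  have h₂ : 1 ≤ |a + b| := Int.one_le_abs fun h => hab' (by linarith)
  have h₃ : 2 * |a| ≤ |a - b| + |a + b| := by
    calc 2 * |a| = |(a - b) + (a + b)| := by rw [← abs_two, ← abs_mul]; ring_nf
      _ ≤ |a - b| + |a + b| := abs_add_le _ _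
  rw [show a ^ 2 - b ^ 2 = (a - b) * (a + b) by ring, abs_mul]
  nlinarith

lemma harmonic_add (m N : ℕ) :
    (harmonic (m + N) : ℝ) = harmonic m + ∑ k ∈ range N, (m + k + 1 : ℝ)⁻¹ := by
  simp only [harmonic, sum_range_add]
  push_cast
  ring_nf

lemma sum_range_inv_sub_inv_add_le_harmonic (m N : ℕ) :
    ∑ i ∈ range N, ((i + 1 : ℝ)⁻¹ - (m + i + 1 : ℝ)⁻¹) ≤ harmonic m := by
  have hN : (harmonic N : ℝ) = ∑ i ∈ range N, (i + 1 : ℝ)⁻¹ := by simpa using harmonic_add 0 N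
  have hmono : (harmonic N : ℝ) ≤ harmonic (m + N) := by
    rw [add_comm, harmonic_add]
    exact le_add_of_nonneg_right (sum_nonneg fun _ _ => by positivity)
  rw [sum_sub_distrib, ← hN]
  linarith [harmonic_add m N]

lemma sum_range_inv_sub_add_inv_add_le_harmonic (n : ℕ) :
    ∑ k ∈ range n, ((n - k : ℝ)⁻¹ + (n + k : ℝ)⁻¹) ≤ harmonic (2 * n) + (n : ℝ)⁻¹ := by
  have hreflect : ∑ k ∈ range n, (n - k : ℝ)⁻¹ = harmonic n := by
    rw [harmonic, ← sum_range_reflect]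
    push_cast
    refine sum_congr rfl fun k hk => ?_
    rw [Nat.cast_sub (by simp at hk; omega), Nat.cast_sub (by simp at hk; omega)]
    ring_nf
  have hshift : ∑ k ∈ range n, (n + k : ℝ)⁻¹ + (n + n : ℝ)⁻¹
      = ∑ k ∈ range n, (n + k + 1 : ℝ)⁻¹ + (n : ℝ)⁻¹ := by
    have h₁ := sum_range_succ (fun k : ℕ => (n + k : ℝ)⁻¹) n
    have h₂ := sum_range_succ' (fun k : ℕ => (n + k : ℝ)⁻¹) n
    push_cast at h₁ h₂
    rw [← h₁, h₂]; ring_nf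
  have h2n : (harmonic (2 * n) : ℝ) = harmonic n + ∑ k ∈ range n, (n + k + 1 : ℝ)⁻¹ := by
    rw [two_mul, harmonic_add]
  have : (0 : ℝ) ≤ (n + n : ℝ)⁻¹ := by positivity
  rw [sum_add_distrib, hreflect]
  linarith

lemma sum_range_inv_abs_sq_sub_sq_le {n : ℕ} (hn : 0 < n) (N : ℕ) :
    ∑ k ∈ range N, |(n : ℝ) ^ 2 - k ^ 2|⁻¹ ≤ (harmonic (2 * n) + (2 * n : ℝ)⁻¹) / n := by
  have hn' : (0 : ℝ) < n := by exact_mod_cast hn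
  have hbelow : ∀ k ∈ range n, |(n : ℝ) ^ 2 - k ^ 2|⁻¹ =
      (2 * n : ℝ)⁻¹ * ((n - k : ℝ)⁻¹ + (n + k : ℝ)⁻¹) := by
    intro k hk
    have hk' : (0 : ℝ) < n - k := sub_pos.2 (by exact_mod_cast mem_range.1 hk)
    rw [show (n : ℝ) ^ 2 - k ^ 2 = (n - k) * (n + k) by ring, abs_of_pos (by positivity)]
    field_simp
    ring
  have habove : ∀ i : ℕ, |(n : ℝ) ^ 2 - ((n + 1 + i : ℕ) : ℝ) ^ 2|⁻¹ =
      (2 * n : ℝ)⁻¹ * ((i + 1 : ℝ)⁻¹ - (2 * n + i + 1 : ℝ)⁻¹) := by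
    intro i
    rw [show (n : ℝ) ^ 2 - ((n + 1 + i : ℕ) : ℝ) ^ 2 = -((i + 1) * (2 * n + i + 1)) by
        push_cast; ring, abs_neg, abs_of_pos (by positivity)]
    field_simp
    ring
  calc ∑ k ∈ range N, |(n : ℝ) ^ 2 - k ^ 2|⁻¹
      ≤ ∑ k ∈ range (n + 1 + N), |(n : ℝ) ^ 2 - k ^ 2|⁻¹ :=
        sum_le_sum_of_subset_of_nonneg (range_mono (by omega)) fun _ _ _ => by positivity
    _ = (2 * n : ℝ)⁻¹ * ∑ k ∈ range n, ((n - k : ℝ)⁻¹ + (n + k : ℝ)⁻¹) +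
        (2 * n : ℝ)⁻¹ * ∑ i ∈ range N, ((i + 1 : ℝ)⁻¹ - (2 * n + i + 1 : ℝ)⁻¹) := by
      -- the term `k = n` is `|0|⁻¹ = 0`
      rw [sum_range_add, sum_range_succ, sum_congr rfl hbelow, sum_congr rfl fun i _ => habove i,
        ← mul_sum, ← mul_sum, sub_self, abs_zero, inv_zero, add_zero]
    _ ≤ (2 * n : ℝ)⁻¹ * (harmonic (2 * n) + (n : ℝ)⁻¹) + (2 * n : ℝ)⁻¹ * harmonic (2 * n) := by
      gcongr
      · exact sum_range_inv_sub_add_inv_add_le_harmonic n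
      · simpa using sum_range_inv_sub_inv_add_le_harmonic (2 * n) N
    _ = (harmonic (2 * n) + (2 * n : ℝ)⁻¹) / n := by
      field_simp
      ring

lemma Function.Even.hasSum_int {G : Type*} [AddCommGroup G] [TopologicalSpace G]
    [IsTopologicalAddGroup G] {f : ℤ → G} (hf : f.Even) {a : G}
    (ha : HasSum (fun k : ℕ => f k) a) : HasSum f (a + a - f 0) := by
  have hneg : HasSum (fun k : ℕ => f (-(k + 1))) (a - f 0) := by
    rw [← hasSum_nat_add_iff' 1] at ha
    convert ha using 1
    · ext k
      simpa using hf (k + 1)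
    · simp
  simpa [add_sub_assoc] using ha.of_nat_of_neg_add_one hneg

lemma exists_hasSum_inv_abs_sq_sub_sq_le {n : ℕ} (hn : 0 < n) :
    ∃ S ≤ 2 * harmonic (2 * n) / (n : ℝ), HasSum (fun j : ℤ => |(n : ℝ) ^ 2 - j ^ 2|⁻¹) S := by
  have hpartial := sum_range_inv_abs_sq_sub_sq_le hn
  have hnat := Real.tsum_le_of_sum_range_le (fun _ => by positivity) hpartial
  have hsum := summable_of_sum_range_le (fun _ => by positivity) hpartial
  have heven : (fun j : ℤ => |(n : ℝ) ^ 2 - j ^ 2|⁻¹).Even := fun j => by simp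
  refine ⟨_, ?_, heven.hasSum_int (by simpa using hsum.hasSum)⟩
  have hn' : (0 : ℝ) < n := by exact_mod_cast hn
  have h0 : |(n : ℝ) ^ 2 - ((0 : ℤ) : ℝ) ^ 2|⁻¹ = ((n : ℝ) ^ 2)⁻¹ := by simp
  calc _ ≤ 2 * ((harmonic (2 * n) + (2 * n : ℝ)⁻¹) / n) - ((n : ℝ) ^ 2)⁻¹ := by
        rw [h0]; linarith
    _ = 2 * harmonic (2 * n) / n := by field_simp; ring

lemma harmonic_lt_log_three_mul {m : ℕ} (hm : 0 < m) : (harmonic m : ℝ) < log (3 * m) := by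
  have hlog3 : 1 < log 3 := by
    rw [lt_log_iff_exp_lt (by norm_num)]
    linarith [exp_one_lt_d9]
  rw [log_mul (by norm_num) (by positivity)]
  linarith [harmonic_le_one_add_log m]

lemma one_div_norm_sq_sub_sq_add_le {n : ℕ} (hn : 2 ≤ n) {j : ℤ} (hj : j ≠ n ∧ j ≠ -n) {z : ℂ}
    (hz : ‖z‖ ≤ 1) : 1 / ‖(n : ℂ) ^ 2 - (j : ℂ) ^ 2 + z‖ ≤ 2 * |(n : ℝ) ^ 2 - j ^ 2|⁻¹ := by
  have hnorm : ‖(n : ℂ) ^ 2 - (j : ℂ) ^ 2‖ = |(n : ℝ) ^ 2 - j ^ 2| := by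
    rw [← Real.norm_eq_abs, ← Complex.norm_real]
    push_cast
    rfl
  have hsep := two_mul_abs_sub_one_le_abs_sq_sub_sq hj.1 hj.2
  have h3 : (3 : ℝ) ≤ |(n : ℝ) ^ 2 - j ^ 2| := by
    have : (3 : ℤ) ≤ |(n : ℤ) ^ 2 - j ^ 2| := by
      rw [abs_of_nonneg (by positivity : (0 : ℤ) ≤ n)] at hsep
      omega
    exact_mod_cast this
  calc 1 / ‖(n : ℂ) ^ 2 - (j : ℂ) ^ 2 + z‖ ≤ 2 / ‖(n : ℂ) ^ 2 - (j : ℂ) ^ 2‖ :=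
        one_div_norm_add_le_two_div_norm (by rw [hnorm]; linarith)
    _ = 2 * |(n : ℝ) ^ 2 - j ^ 2|⁻¹ := by rw [hnorm, div_eq_mul_inv]

lemma summable_and_tsum_one_div_norm_sq_sub_sq_add_lt {n : ℕ} (hn : 2 ≤ n) {z : ℂ}
    (hz : ‖z‖ ≤ 1) :
    Summable (fun j : {m : ℤ // m ≠ n ∧ m ≠ -n} => 1 / ‖(n : ℂ) ^ 2 - ((j : ℤ) : ℂ) ^ 2 + z‖) ∧
    ∑' j : {m : ℤ // m ≠ n ∧ m ≠ -n}, 1 / ‖(n : ℂ) ^ 2 - ((j : ℤ) : ℂ) ^ 2 + z‖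
      < 4 * log (6 * n) / n := by
  obtain ⟨S, hS, hg⟩ := exists_hasSum_inv_abs_sq_sub_sq_le (n := n) (by omega)
  have hle : ∀ j : {m : ℤ // m ≠ n ∧ m ≠ -n}, 1 / ‖(n : ℂ) ^ 2 - ((j : ℤ) : ℂ) ^ 2 + z‖ ≤
      2 * |(n : ℝ) ^ 2 - ((j : ℤ) : ℝ) ^ 2|⁻¹ := fun j => one_div_norm_sq_sub_sq_add_le hn j.2 hz
  have hmaj := (hg.summable.subtype {m : ℤ | m ≠ n ∧ m ≠ -n}).mul_left 2
  have hsum := hmaj.of_nonneg_of_le (fun _ => by positivity) hle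
  have hsub : ∑' j : {m : ℤ // m ≠ n ∧ m ≠ -n}, |(n : ℝ) ^ 2 - ((j : ℤ) : ℝ) ^ 2|⁻¹ ≤ S :=
    hg.tsum_eq ▸ hg.summable.tsum_subtype_le _ _ fun _ => by positivity
  have hH : (harmonic (2 * n) : ℝ) < log (6 * n) := by
    have := harmonic_lt_log_three_mul (m := 2 * n) (by omega)
    rwa [Nat.cast_mul, Nat.cast_two, ← mul_assoc, show (3 : ℝ) * 2 = 6 by norm_num] at this
  refine ⟨hsum, ?_⟩
  calc _ ≤ ∑' j : {m : ℤ // m ≠ n ∧ m ≠ -n}, 2 * |(n : ℝ) ^ 2 - ((j : ℤ) : ℝ) ^ 2|⁻¹ :=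
        hsum.tsum_le_tsum hle hmaj
    _ ≤ 2 * S := by rw [tsum_mul_left]; gcongr
    _ ≤ 2 * (2 * harmonic (2 * n) / n) := by gcongr
    _ < 2 * (2 * log (6 * n) / n) := by gcongr
    _ = 4 * log (6 * n) / n := by ring

/-- For every integer `n ≥ 2`, every integer `ν ≥ 1`, and every `z ∈ ℂ` with `|z| ≤ 1`,
the sum over all `ν`-tuples `(j₁, …, j_ν)` of integers avoiding `±n` of
`∏_{s=1}^ν 1/|n² - j_s² + z|` is strictly less than `(4 log(6n) / n)^ν`. -/
theorem mathieu_stmt_1 (n : ℕ) (hn : 2 ≤ n) (ν : ℕ) (hν : 1 ≤ ν) (z : ℂ) (hz : ‖z‖ ≤ 1) :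
    Summable (fun j : Fin ν → {m : ℤ // m ≠ (n : ℤ) ∧ m ≠ -(n : ℤ)} =>
      ∏ s : Fin ν, 1 / ‖(n : ℂ) ^ 2 - ((j s : ℤ) : ℂ) ^ 2 + z‖) ∧
    ∑' j : Fin ν → {m : ℤ // m ≠ (n : ℤ) ∧ m ≠ -(n : ℤ)},
        ∏ s : Fin ν, 1 / ‖(n : ℂ) ^ 2 - ((j s : ℤ) : ℂ) ^ 2 + z‖
      < (4 * Real.log (6 * n) / n) ^ ν := by
  obtain ⟨hsum, hlt⟩ := summable_and_tsum_one_div_norm_sq_sub_sq_add_lt hn hz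
  have htuple := hasSum_prod_pi_fin_of_nonneg (fun _ => by positivity) hsum ν
  refine ⟨htuple.summable, ?_⟩
  rw [htuple.tsum_eq]
  exact pow_lt_pow_left₀ hlt (tsum_nonneg fun _ => by positivity) (by omega)
end

section
/- Let a ∈ ℂ, a ≠ 0, and let V be the Mathieu Fourier coefficients. For every integer n ≥ 2, every z ∈ ℂ with |z| ≤ 1, and every integer ν with 0 ≤ ν < n − 1, one has S_ν^{21}(n,z) = 0. -/
/-!
Each term of `S_ν^{21}(n,z)` carries the product `V(n + j₁) V(j₂ - j₁) ⋯ V(n - j_ν)`, whose factors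
are the `ν + 1` steps of a walk from `-n` to `n`. Since the Mathieu `V` vanishes off `±2`, a
nonzero term needs steps of length `2`, which cover at most `2(ν + 1) < 2n`: every term vanishes.
-/

open Complex

/-- Extended walk: `extWalk b e k j i` equals `b` for `i = 0`, `j (i-1)` for `1 ≤ i ≤ k`,
and `e` for `i > k`. -/
def extWalk (b e : ℤ) (k : ℕ) (j : Fin k → ℤ) : ℕ → ℤ := fun i =>
  if h : 1 ≤ i ∧ i ≤ k then j ⟨i - 1, by omega⟩ else if i = 0 then b else e

/-- Generic term of the sums `S_k^{ij}(n,z)`: for a `k`-tuple `j` of integers avoiding `±n`,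
the value `V(j₁ - b) V(j₂ - j₁) ⋯ V(j_k - j_{k-1}) V(e - j_k) / ∏_s (n² - j_s² + z)`. -/
noncomputable def Sterm (V : ℤ → ℂ) (n : ℕ) (z : ℂ) (b e : ℤ) (k : ℕ)
    (j : Fin k → {m : ℤ // m ≠ (n : ℤ) ∧ m ≠ -(n : ℤ)}) : ℂ :=
  (∏ i ∈ Finset.range (k + 1),
      V (extWalk b e k (fun s => (j s : ℤ)) (i + 1) - extWalk b e k (fun s => (j s : ℤ)) i)) /
    ∏ s : Fin k, ((n : ℂ) ^ 2 - ((j s : ℤ) : ℂ) ^ 2 + z)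

/-- The Mathieu Fourier coefficients: `V(2) = V(-2) = a` and `V(m) = 0` for `m ≠ ±2`. -/
noncomputable def mathieuV (a : ℂ) : ℤ → ℂ := fun m => if m = 2 ∨ m = -2 then a else 0

/-- `S_k^{21}(n,z)` for the Mathieu potential (for `k = 0` it equals `V(2n)`). -/
noncomputable def S21 (a : ℂ) (n : ℕ) (z : ℂ) (k : ℕ) : ℂ :=
  ∑' j : Fin k → {m : ℤ // m ≠ (n : ℤ) ∧ m ≠ -(n : ℤ)},
    Sterm (mathieuV a) n z (-(n : ℤ)) (n : ℤ) k j

lemma abs_sub_le_of_abs_step_le (w : ℕ → ℤ) (d : ℤ) (k : ℕ)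
    (hstep : ∀ i < k, |w (i + 1) - w i| ≤ d) : |w k - w 0| ≤ d * k := by
  calc |w k - w 0| = |∑ i ∈ Finset.range k, (w (i + 1) - w i)| := by
        rw [Finset.sum_range_sub]
    _ ≤ ∑ i ∈ Finset.range k, |w (i + 1) - w i| := Finset.abs_sum_le_sum_abs _ _
    _ ≤ ∑ _i ∈ Finset.range k, d :=
        Finset.sum_le_sum fun i hi => hstep i (Finset.mem_range.mp hi)
    _ = d * k := by simp [mul_comm]

section extWalk

variable (b e : ℤ) (k : ℕ) (j : Fin k → ℤ)

lemma extWalk_zero : extWalk b e k j 0 = b := by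
  simp [extWalk]

lemma extWalk_succ_self : extWalk b e k j (k + 1) = e := by
  simp [extWalk]

end extWalk

lemma Sterm_eq_zero_of_lt_abs_sub (V : ℤ → ℂ) (d : ℤ) (hV : ∀ m, V m ≠ 0 → |m| ≤ d)
    (n : ℕ) (z : ℂ) (b e : ℤ) (k : ℕ) (hgap : d * (k + 1) < |e - b|)
    (j : Fin k → {m : ℤ // m ≠ (n : ℤ) ∧ m ≠ -(n : ℤ)}) :
    Sterm V n z b e k j = 0 := by
  set w := extWalk b e k (fun s => (j s : ℤ))
  suffices hnum : ∏ i ∈ Finset.range (k + 1), V (w (i + 1) - w i) = 0 by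
    rw [Sterm, hnum, zero_div]
  by_contra hne
  have hstep : ∀ i < k + 1, |w (i + 1) - w i| ≤ d := fun i hi =>
    hV _ fun h0 => hne (Finset.prod_eq_zero (Finset.mem_range.mpr hi) h0)
  have hreach := abs_sub_le_of_abs_step_le w d (k + 1) hstep
  rw [show w 0 = b from extWalk_zero .., show w (k + 1) = e from extWalk_succ_self ..] at hreach
  push_cast at hreach
  exact hreach.not_gt hgap

lemma abs_le_two_of_mathieuV_ne_zero (a : ℂ) (m : ℤ) (h : mathieuV a m ≠ 0) : |m| ≤ 2 := by
  unfold mathieuV at h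
  rcases (ite_ne_right_iff.mp h).1 with rfl | rfl <;> norm_num

theorem mathieu_stmt_5_general (a : ℂ) (n : ℕ) (z : ℂ)
    (ν : ℕ) (hν : ν < n - 1) :
    S21 a n z ν = 0 := by
  have hgap : 2 * ((ν : ℤ) + 1) < |(n : ℤ) - -(n : ℤ)| := by
    rw [abs_of_nonneg (by omega)]
    omega
  have hterm := Sterm_eq_zero_of_lt_abs_sub (mathieuV a) 2
    (abs_le_two_of_mathieuV_ne_zero a) n z _ _ ν hgap
  simp only [S21, hterm, tsum_zero]

/-- For the Mathieu potential, `S_ν^{21}(n,z) = 0` whenever `0 ≤ ν < n - 1`. -/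
theorem mathieu_stmt_5 (a : ℂ) (ha : a ≠ 0) (n : ℕ) (hn : 2 ≤ n) (z : ℂ) (hz : ‖z‖ ≤ 1)
    (ν : ℕ) (hν : ν < n - 1) :
    S21 a n z ν = 0 :=
  mathieu_stmt_5_general a n z ν hν
end

section
/- Let a ∈ ℂ, a ≠ 0, and let V be the Mathieu Fourier coefficients. For every integer n ≥ 3 and every z ∈ ℂ with |z| ≤ 1, one has A_3(n,z) = a⁴ / ((n²−(n+2)²+z)²·(n²−(n+4)²+z)) + a⁴ / ((n²−(n−2)²+z)²·(n²−(n−4)²+z)). Consequently there is a constant C (depending only on a) such that |A_3(n,z)| ≤ C/n⁴ for all n ≥ 3 and |z| ≤ 1. -/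
open Complex

/-- `A_p(n,z)` for the Mathieu potential: the sum over `p`-tuples `(j₁,…,j_p)` of integers
avoiding `±n` of `V(-n+j₁) V(j₂-j₁) ⋯ V(j_p-j_{p-1}) V(n-j_p) / ∏_s (n²-j_s²+z)`. -/
noncomputable def Acoef (a : ℂ) (n : ℕ) (z : ℂ) (p : ℕ) : ℂ :=
  ∑' j : Fin p → {m : ℤ // m ≠ (n : ℤ) ∧ m ≠ -(n : ℤ)},
    Sterm (mathieuV a) n z (n : ℤ) (n : ℤ) p j

/-! Since `V` is supported on `±2`, a nonzero term of `A₃(n,z)` is a closed walk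
`n → j₁ → j₂ → j₃ → n` with steps `±2` avoiding `±n`, and only `(n+2, n+4, n+2)` and
`(n-2, n-4, n-2)` qualify. The denominators of these two terms are `∓4n` and `∓8n` up to `O(1)`,
so their leading `n⁻³` parts cancel: over the common denominator, of size at least `n⁶`, the
numerator is `a⁴((160z - 1024)n² + O(1))`. -/

lemma Sterm_three (V : ℤ → ℂ) (n : ℕ) (z : ℂ) (b e : ℤ)
    (j : Fin 3 → {m : ℤ // m ≠ (n : ℤ) ∧ m ≠ -(n : ℤ)}) :
    Sterm V n z b e 3 j =
      V ((j 0 : ℤ) - b) * V ((j 1 : ℤ) - (j 0 : ℤ)) * V ((j 2 : ℤ) - (j 1 : ℤ)) *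
          V (e - (j 2 : ℤ)) /
        (((n : ℂ) ^ 2 - ((j 0 : ℤ) : ℂ) ^ 2 + z) * ((n : ℂ) ^ 2 - ((j 1 : ℤ) : ℂ) ^ 2 + z) *
          ((n : ℂ) ^ 2 - ((j 2 : ℤ) : ℂ) ^ 2 + z)) := by
  unfold Sterm extWalk
  rw [Fin.prod_univ_three]
  simp [Finset.prod_range_succ]

lemma eq_two_or_eq_neg_two_of_mathieuV_ne_zero {a : ℂ} {m : ℤ} (h : mathieuV a m ≠ 0) :
    m = 2 ∨ m = -2 := by
  by_contra hm
  exact h (if_neg hm)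

lemma mathieu_closed_walk_three {a : ℂ} {n j₀ j₁ j₂ : ℤ} (hj₁ : j₁ ≠ n)
    (h : mathieuV a (j₀ - n) * mathieuV a (j₁ - j₀) * mathieuV a (j₂ - j₁) *
      mathieuV a (n - j₂) ≠ 0) :
    (j₀ = n + 2 ∧ j₁ = n + 4 ∧ j₂ = n + 2) ∨ (j₀ = n - 2 ∧ j₁ = n - 4 ∧ j₂ = n - 2) := by
  simp only [mul_ne_zero_iff] at h
  obtain ⟨⟨⟨h₀, h₁⟩, h₂⟩, h₃⟩ := h
  have := eq_two_or_eq_neg_two_of_mathieuV_ne_zero h₀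
  have := eq_two_or_eq_neg_two_of_mathieuV_ne_zero h₁
  have := eq_two_or_eq_neg_two_of_mathieuV_ne_zero h₂
  have := eq_two_or_eq_neg_two_of_mathieuV_ne_zero h₃
  omega

theorem Acoef_three (a : ℂ) {n : ℕ} (hn : 3 ≤ n) (z : ℂ) :
    Acoef a n z 3
      = a ^ 4 / (((n : ℂ) ^ 2 - ((n : ℂ) + 2) ^ 2 + z) ^ 2 *
          ((n : ℂ) ^ 2 - ((n : ℂ) + 4) ^ 2 + z))
        + a ^ 4 / (((n : ℂ) ^ 2 - ((n : ℂ) - 2) ^ 2 + z) ^ 2 *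
          ((n : ℂ) ^ 2 - ((n : ℂ) - 4) ^ 2 + z)) := by
  let up : Fin 3 → {m : ℤ // m ≠ (n : ℤ) ∧ m ≠ -(n : ℤ)} :=
    ![⟨n + 2, by omega⟩, ⟨n + 4, by omega⟩, ⟨n + 2, by omega⟩]
  let down : Fin 3 → {m : ℤ // m ≠ (n : ℤ) ∧ m ≠ -(n : ℤ)} :=
    ![⟨n - 2, by omega⟩, ⟨n - 4, by omega⟩, ⟨n - 2, by omega⟩]
  have hsupp : Acoef a n z 3 = ∑ j ∈ {up, down}, Sterm (mathieuV a) n z n n 3 j := by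
    refine tsum_eq_sum fun j hj => ?_
    rw [Sterm_three, div_eq_zero_iff]
    left
    by_contra hne
    simp only [Finset.mem_insert, Finset.mem_singleton, not_or] at hj
    rcases mathieu_closed_walk_three (j 1).2.1 hne with ⟨h₀, h₁, h₂⟩ | ⟨h₀, h₁, h₂⟩
    · exact hj.1 (funext fun i => by fin_cases i <;> exact Subtype.ext ‹_›)
    · exact hj.2 (funext fun i => by fin_cases i <;> exact Subtype.ext ‹_›)
  have hne : up ≠ down := fun h => by
    have : (n : ℤ) + 2 = n - 2 := congrArg (fun j => ((j 0 : _) : ℤ)) h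
    omega
  rw [hsupp, Finset.sum_pair hne, Sterm_three, Sterm_three]
  simp only [up, down, Matrix.cons_val, mathieuV]
  norm_num
  ring

lemma le_norm_of_eq_ofReal_add {x w : ℝ} {d z : ℂ} (hd : d = w + z) (hw : x + ‖z‖ ≤ |w|) :
    x ≤ ‖d‖ := by
  have := norm_sub_le_norm_add (w : ℂ) z
  rw [norm_real, Real.norm_eq_abs, ← hd] at this
  linarith

lemma norm_mathieu_numerator_le {x : ℝ} (hx : 1 ≤ x) {z : ℂ} (hz : ‖z‖ ≤ 1) :
    ‖(160 * z - 1024) * (x : ℂ) ^ 2 + (2 * z ^ 3 - 48 * z ^ 2 + 288 * z - 512)‖ ≤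
      2034 * x ^ 2 := by
  grw [norm_add_le, norm_sub_le, norm_add_le, norm_sub_le, norm_mul, norm_sub_le]
  simp only [norm_mul, norm_pow, norm_real, Real.norm_eq_abs]
  norm_num
  have : ‖z‖ ^ 2 ≤ 1 := pow_le_one₀ (norm_nonneg z) hz
  have : ‖z‖ ^ 3 ≤ 1 := pow_le_one₀ (norm_nonneg z) hz
  nlinarith [norm_nonneg z]

theorem norm_Acoef_three_le (a : ℂ) {n : ℕ} (hn : 3 ≤ n) {z : ℂ} (hz : ‖z‖ ≤ 1) :
    ‖Acoef a n z 3‖ ≤ 2034 * ‖a‖ ^ 4 / (n : ℝ) ^ 4 := by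
  have hn' : (3 : ℝ) ≤ n := by exact_mod_cast hn
  set d₁ : ℂ := (n : ℂ) ^ 2 - ((n : ℂ) + 2) ^ 2 + z with hd₁
  set d₂ : ℂ := (n : ℂ) ^ 2 - ((n : ℂ) - 2) ^ 2 + z with hd₂
  set d₃ : ℂ := (n : ℂ) ^ 2 - ((n : ℂ) + 4) ^ 2 + z with hd₃
  set d₄ : ℂ := (n : ℂ) ^ 2 - ((n : ℂ) - 4) ^ 2 + z with hd₄
  have h₁ : (n : ℝ) ≤ ‖d₁‖ := le_norm_of_eq_ofReal_add (z := z) (w := -(4 * n + 4))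
    (by push_cast; ring) (by rw [abs_of_neg (by linarith)]; linarith)
  have h₂ : (n : ℝ) ≤ ‖d₂‖ := le_norm_of_eq_ofReal_add (z := z) (w := 4 * n - 4)
    (by push_cast; ring) (by rw [abs_of_pos (by linarith)]; linarith)
  have h₃ : (n : ℝ) ≤ ‖d₃‖ := le_norm_of_eq_ofReal_add (z := z) (w := -(8 * n + 16))
    (by push_cast; ring) (by rw [abs_of_neg (by linarith)]; linarith)
  have h₄ : (n : ℝ) ≤ ‖d₄‖ := le_norm_of_eq_ofReal_add (z := z) (w := 8 * n - 16)
    (by push_cast; ring) (by rw [abs_of_pos (by linarith)]; linarith)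
  have hd : ∀ {d : ℂ}, (n : ℝ) ≤ ‖d‖ → d ≠ 0 := fun h h0 => by
    rw [h0, norm_zero] at h; linarith
  rw [Acoef_three a hn z, div_add_div _ _ (mul_ne_zero (pow_ne_zero 2 (hd h₁)) (hd h₃))
    (mul_ne_zero (pow_ne_zero 2 (hd h₂)) (hd h₄))]
  have hnum : a ^ 4 * (d₂ ^ 2 * d₄) + d₁ ^ 2 * d₃ * a ^ 4 = a ^ 4 *
      ((160 * z - 1024) * ((n : ℝ) : ℂ) ^ 2 + (2 * z ^ 3 - 48 * z ^ 2 + 288 * z - 512)) := by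
    simp only [hd₁, hd₂, hd₃, hd₄, ofReal_natCast]; ring
  rw [hnum]
  calc _ = ‖a‖ ^ 4 * ‖(160 * z - 1024) * ((n : ℝ) : ℂ) ^ 2 +
          (2 * z ^ 3 - 48 * z ^ 2 + 288 * z - 512)‖ / (‖d₁‖ ^ 2 * ‖d₃‖ * (‖d₂‖ ^ 2 * ‖d₄‖)) := by
        simp only [norm_div, norm_mul, norm_pow]
    _ ≤ ‖a‖ ^ 4 * (2034 * n ^ 2) / (n ^ 2 * n * (n ^ 2 * n)) := by
        gcongr
        exact norm_mathieu_numerator_le (by linarith) hz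
    _ = 2034 * ‖a‖ ^ 4 / (n : ℝ) ^ 4 := by
        field_simp

theorem mathieu_stmt_9_general (a : ℂ) :
    (∀ n : ℕ, 3 ≤ n → ∀ z : ℂ, ‖z‖ ≤ 1 →
      Acoef a n z 3
        = a ^ 4 / (((n : ℂ) ^ 2 - ((n : ℂ) + 2) ^ 2 + z) ^ 2 *
            ((n : ℂ) ^ 2 - ((n : ℂ) + 4) ^ 2 + z))
          + a ^ 4 / (((n : ℂ) ^ 2 - ((n : ℂ) - 2) ^ 2 + z) ^ 2 *
            ((n : ℂ) ^ 2 - ((n : ℂ) - 4) ^ 2 + z))) ∧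
    ∃ C : ℝ, ∀ n : ℕ, 3 ≤ n → ∀ z : ℂ, ‖z‖ ≤ 1 →
      ‖Acoef a n z 3‖ ≤ C / (n : ℝ) ^ 4 :=
  ⟨fun _ hn z _ => Acoef_three a hn z, 2034 * ‖a‖ ^ 4,
    fun _ hn _ hz => norm_Acoef_three_le a hn hz⟩

/-- For the Mathieu potential, an explicit formula for `A_3(n,z)`, and consequently a bound
`|A_3(n,z)| ≤ C/n⁴` for all `n ≥ 3` and `|z| ≤ 1`, with `C` depending only on `a`. -/
theorem mathieu_stmt_9 (a : ℂ) (ha : a ≠ 0) :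
    (∀ n : ℕ, 3 ≤ n → ∀ z : ℂ, ‖z‖ ≤ 1 →
      Acoef a n z 3
        = a ^ 4 / (((n : ℂ) ^ 2 - ((n : ℂ) + 2) ^ 2 + z) ^ 2 *
            ((n : ℂ) ^ 2 - ((n : ℂ) + 4) ^ 2 + z))
          + a ^ 4 / (((n : ℂ) ^ 2 - ((n : ℂ) - 2) ^ 2 + z) ^ 2 *
            ((n : ℂ) ^ 2 - ((n : ℂ) - 4) ^ 2 + z))) ∧
    ∃ C : ℝ, ∀ n : ℕ, 3 ≤ n → ∀ z : ℂ, ‖z‖ ≤ 1 →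
      ‖Acoef a n z 3‖ ≤ C / (n : ℝ) ^ 4 :=
  mathieu_stmt_9_general a
end

section
/- Let a ∈ ℂ, a ≠ 0, and let V be the Mathieu Fourier coefficients. For every integer n ≥ 2 and every z ∈ ℂ with |z| ≤ 1, one has S_{n−1}^{21}(n,z) = a^n / ∏_{k=1}^{n−1} (n² − (−n+2k)² + z). In particular, S_{n−1}^{21}(n,0) = 4·(a/4)^n / ((n−1)!)². -/
open Complex

/-! A nonzero term of `S_{n-1}^{21}(n,z)` is a walk `-n = j₀, j₁, …, j_{n-1}, j_n = n` whose steps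
all lie in `{2, -2}`. Its total displacement `2n` forces every step to be `+2`, so only the walk
`j_s = -n + 2s` survives, and it contributes `a^n` over the product of its denominators. At `z = 0`
these factor as `n² - (2k - n)² = 4k(n - k)`, giving `4^(n-1) ((n-1)!)²`. -/

section StepBoundedWalk

variable {W : ℕ → ℤ} {n : ℕ} {c : ℤ}

theorem le_add_mul_of_step_le (hstep : ∀ m < n, W (m + 1) ≤ W m + c) {i j : ℕ} (hij : i ≤ j)
    (hjn : j ≤ n) : W j ≤ W i + (j - i : ℕ) * c := by
  induction j, hij using Nat.le_induction with
  | base => simp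
  | succ j hij ih =>
    have := hstep j (by omega)
    have := ih (by omega)
    rw [Nat.succ_sub hij]
    push_cast
    linarith

theorem eq_add_mul_of_step_le (hstep : ∀ m < n, W (m + 1) ≤ W m + c) (hend : W n = W 0 + n * c)
    {i : ℕ} (hi : i ≤ n) : W i = W 0 + i * c := by
  have hfirst := le_add_mul_of_step_le hstep (Nat.zero_le i) hi
  have hlast := le_add_mul_of_step_le hstep hi le_rfl
  push_cast [Nat.sub_zero, Nat.cast_sub hi] at hfirst hlast
  linarith

end StepBoundedWalk

namespace extWalk

variable {b e : ℤ} {k : ℕ} {j : Fin k → ℤ}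

@[simp]
theorem zero : extWalk b e k j 0 = b := by
  simp [extWalk]

theorem of_lt {i : ℕ} (hi : k < i) : extWalk b e k j i = e := by
  rw [extWalk, dif_neg (by omega), if_neg (by omega)]

@[simp]
theorem succ (s : Fin k) : extWalk b e k j (s + 1) = j s := by
  rw [extWalk, dif_pos (by omega)]
  rfl

theorem eq_of_le {f : ℕ → ℤ} (h0 : f 0 = b) (hj : ∀ s : Fin k, j s = f (s + 1))
    (he : f (k + 1) = e) {i : ℕ} (hi : i ≤ k + 1) : extWalk b e k j i = f i := by
  rcases i with _ | i
  · simp [h0]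
  · rcases (show i < k ∨ i = k by omega) with hik | rfl
    · exact (succ ⟨i, hik⟩).trans (hj _)
    · rw [of_lt (by omega), he]

end extWalk

theorem Nat.Icc_one_sub_one_eq_Ico (n : ℕ) : Finset.Icc 1 (n - 1) = Finset.Ico 1 n := by
  ext
  simp only [Finset.mem_Icc, Finset.mem_Ico]
  omega

theorem Nat.prod_Ico_mul_sub_eq_factorial_sq (n : ℕ) :
    ∏ k ∈ Finset.Ico 1 n, k * (n - k) = (n - 1).factorial ^ 2 := by
  rcases n with _ | n
  · simp
  have hreflect := Finset.prod_Ico_reflect (fun x => x) 1 (Nat.le_succ (n + 1))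
  simp only [Nat.add_sub_cancel, Nat.reduceSubDiff] at hreflect
  rw [Finset.prod_mul_distrib, hreflect]
  simp [sq]

theorem prod_sq_sub_sq_eq_factorial_sq {R : Type*} [CommRing R] (n : ℕ) :
    ∏ k ∈ Finset.Icc 1 (n - 1), ((n : R) ^ 2 - (-(n : R) + 2 * (k : R)) ^ 2)
      = 4 ^ (n - 1) * ((n - 1).factorial : R) ^ 2 := by
  have hfactor : ∀ k ∈ Finset.Ico 1 n,
      (n : R) ^ 2 - (-(n : R) + 2 * (k : R)) ^ 2 = 4 * ((k * (n - k) : ℕ) : R) := by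
    intro k hk
    push_cast [Nat.cast_sub (Finset.mem_Ico.mp hk).2.le]
    ring
  rw [Nat.Icc_one_sub_one_eq_Ico, Finset.prod_congr rfl hfactor, Finset.prod_mul_distrib,
    Finset.prod_const, Nat.card_Ico, ← Nat.cast_prod, Nat.prod_Ico_mul_sub_eq_factorial_sq]
  push_cast
  rfl

theorem Sterm_eq_zero_of_step {V : ℤ → ℂ} {n : ℕ} {z : ℂ} {b e : ℤ} {k : ℕ}
    {j : Fin k → {m : ℤ // m ≠ (n : ℤ) ∧ m ≠ -(n : ℤ)}} {i : ℕ} (hi : i ≤ k)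
    (h : V (extWalk b e k (fun s => (j s : ℤ)) (i + 1)
      - extWalk b e k (fun s => (j s : ℤ)) i) = 0) :
    Sterm V n z b e k j = 0 := by
  rw [Sterm, Finset.prod_eq_zero (Finset.mem_range.mpr (Nat.lt_succ_of_le hi)) h, zero_div]

section MathieuPath

variable {a z : ℂ} {n : ℕ}

@[simp]
theorem mathieuV_two : mathieuV a 2 = a := by
  simp [mathieuV]

theorem mathieuV_eq_zero_of_two_lt {m : ℤ} (hm : 2 < m) : mathieuV a m = 0 := by
  rw [mathieuV, if_neg (by omega)]

def mathieuPath (n : ℕ) : Fin (n - 1) → {m : ℤ // m ≠ (n : ℤ) ∧ m ≠ -(n : ℤ)} :=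
  fun s => ⟨-n + 2 * (s + 1), by have := s.isLt; omega⟩

theorem extWalk_mathieuPath (hn : 1 ≤ n) {i : ℕ} (hi : i ≤ n) :
    extWalk (-n) n (n - 1) (fun s => (mathieuPath n s : ℤ)) i = -n + 2 * i := by
  refine extWalk.eq_of_le (f := fun i => -(n : ℤ) + 2 * i) (by simp)
    (fun s => by simp [mathieuPath]) ?_ (by omega)
  rw [Nat.sub_add_cancel hn]
  ring

theorem eq_mathieuPath_of_Sterm_ne_zero (hn : 1 ≤ n)
    {j : Fin (n - 1) → {m : ℤ // m ≠ (n : ℤ) ∧ m ≠ -(n : ℤ)}}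
    (h : Sterm (mathieuV a) n z (-n) n (n - 1) j ≠ 0) : j = mathieuPath n := by
  set W := extWalk (-(n : ℤ)) n (n - 1) (fun s => (j s : ℤ)) with hW
  have hstep : ∀ m < n, W (m + 1) ≤ W m + 2 := fun m hm => by
    by_contra! hjump
    exact h <| Sterm_eq_zero_of_step (i := m) (by omega) <|
      mathieuV_eq_zero_of_two_lt (by rw [← hW]; omega)
  have hend : W n = W 0 + n * 2 := by
    rw [hW, extWalk.of_lt (by omega), extWalk.zero]
    ring
  funext s
  have hs := eq_add_mul_of_step_le hstep hend (i := s + 1) (by omega)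
  rw [hW, extWalk.succ, extWalk.zero] at hs
  ext
  simp only [mathieuPath, hs]
  push_cast
  ring

theorem Sterm_mathieuPath (hn : 1 ≤ n) :
    Sterm (mathieuV a) n z (-n) n (n - 1) (mathieuPath n)
      = a ^ n / ∏ k ∈ Finset.Icc 1 (n - 1), ((n : ℂ) ^ 2 - (-(n : ℂ) + 2 * (k : ℂ)) ^ 2 + z) := by
  have hsteps : ∀ i ∈ Finset.range (n - 1 + 1),
      mathieuV a (extWalk (-n) n (n - 1) (fun s => (mathieuPath n s : ℤ)) (i + 1)
        - extWalk (-n) n (n - 1) (fun s => (mathieuPath n s : ℤ)) i) = a := by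
    intro i hi
    rw [Finset.mem_range, Nat.sub_add_cancel hn] at hi
    rw [extWalk_mathieuPath hn hi, extWalk_mathieuPath hn hi.le, ← mathieuV_two (a := a)]
    congr 1
    push_cast
    ring
  rw [Sterm, Finset.prod_congr rfl hsteps, Finset.prod_const, Finset.card_range,
    Nat.sub_add_cancel hn, Nat.Icc_one_sub_one_eq_Ico, Finset.prod_Ico_eq_prod_range,
    ← Fin.prod_univ_eq_prod_range]
  congr 1
  refine Finset.prod_congr rfl fun s _ => ?_
  simp only [mathieuPath]
  push_cast
  ring

theorem S21_sub_one (hn : 1 ≤ n) :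
    S21 a n z (n - 1)
      = a ^ n / ∏ k ∈ Finset.Icc 1 (n - 1), ((n : ℂ) ^ 2 - (-(n : ℂ) + 2 * (k : ℂ)) ^ 2 + z) := by
  rw [S21, tsum_eq_single (mathieuPath n) fun j hj =>
    by_contra fun h => hj (eq_mathieuPath_of_Sterm_ne_zero hn h), Sterm_mathieuPath hn]

end MathieuPath

theorem mathieu_stmt_13_general (a : ℂ) (n : ℕ) (hn : 2 ≤ n) (z : ℂ) :
    S21 a n z (n - 1)
      = a ^ n / ∏ k ∈ Finset.Icc 1 (n - 1), ((n : ℂ) ^ 2 - (-(n : ℂ) + 2 * (k : ℂ)) ^ 2 + z) ∧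
    S21 a n 0 (n - 1) = 4 * (a / 4) ^ n / ((Nat.factorial (n - 1) : ℂ)) ^ 2 := by
  have hn1 : 1 ≤ n := by omega
  have hpow : (4 : ℂ) ^ n = 4 * 4 ^ (n - 1) := by rw [← pow_succ', Nat.sub_add_cancel hn1]
  refine ⟨S21_sub_one hn1, ?_⟩
  simp_rw [S21_sub_one hn1, add_zero, prod_sq_sub_sq_eq_factorial_sq, div_pow, hpow]
  field_simp

/-- For the Mathieu potential, `S_{n-1}^{21}(n,z) = a^n / ∏_{k=1}^{n-1} (n²-(-n+2k)²+z)`;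
in particular `S_{n-1}^{21}(n,0) = 4 (a/4)^n / ((n-1)!)²`. -/
theorem mathieu_stmt_13 (a : ℂ) (ha : a ≠ 0) (n : ℕ) (hn : 2 ≤ n) (z : ℂ) (hz : ‖z‖ ≤ 1) :
    S21 a n z (n - 1)
      = a ^ n / ∏ k ∈ Finset.Icc 1 (n - 1), ((n : ℂ) ^ 2 - (-(n : ℂ) + 2 * (k : ℂ)) ^ 2 + z) ∧
    S21 a n 0 (n - 1) = 4 * (a / 4) ^ n / ((Nat.factorial (n - 1) : ℂ)) ^ 2 :=
  mathieu_stmt_13_general a n hn z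
end

section
/- Let a ∈ ℂ, a ≠ 0. For every M > 0 there exist a constant C > 0 and an integer N such that for all n ≥ N and all z ∈ ℂ with |z − a²/(2n²)| ≤ M/n⁴, one has |∏_{k=1}^{n−1} (1 + z/(4k(n−k)))^{−1} − (1 − a²·log n/(4n³) − a²·γ/(4n³))| ≤ C/n⁴. -/
/-!
Put `w_k = z / (4k(n-k))`. Partial fractions give `∑ w_k = z H_{n-1} / (2n)`, and on the given
disc `|z| = O(n⁻²)`, so `∑ |w_k| = O(n⁻²)` and `∏ (1 + w_k)⁻¹ = 1 - ∑ w_k + O(n⁻⁴)`.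
Replacing `z` by its centre `a² / (2n²)` costs `O(M n⁻⁴)`, and replacing `H_{n-1}` by
`log n + γ` costs `O(|a|² n⁻⁴)` because `0 ≤ γ - (H_{n-1} - log n) ≤ 1/n`.
-/

open Finset

section ProductExpansion

variable {ι : Type*}

theorem Finset.norm_prod_one_add_sub_one_sub_sum_le {R : Type*} [NormedCommRing R]
    [NormOneClass R] (t : Finset ι) (f : ι → R) :
    ‖∏ i ∈ t, (1 + f i) - 1 - ∑ i ∈ t, f i‖ ≤
      Real.exp (∑ i ∈ t, ‖f i‖) - 1 - ∑ i ∈ t, ‖f i‖ := by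
  classical
  induction t using Finset.induction_on with
  | empty => simp
  | insert x t hx IH =>
    rw [prod_insert hx, sum_insert hx, sum_insert hx, Real.exp_add,
      show (1 + f x) * ∏ i ∈ t, (1 + f i) - 1 - (f x + ∑ i ∈ t, f i) =
        (∏ i ∈ t, (1 + f i) - 1 - ∑ i ∈ t, f i) + f x * (∏ i ∈ t, (1 + f i) - 1) by ring]
    refine (norm_add_le_of_le IH (norm_mul_le _ _)).trans ?_
    grw [t.norm_prod_one_add_sub_one_le f]
    nlinarith [Real.add_one_le_exp ‖f x‖, Real.exp_pos (∑ i ∈ t, ‖f i‖), norm_nonneg (f x)]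

theorem norm_inv_one_add_sub_one_sub_le {𝕜 : Type*} [NormedField 𝕜] {x : 𝕜}
    (hx : ‖x‖ ≤ 1 / 2) : ‖(1 + x)⁻¹ - (1 - x)‖ ≤ 2 * ‖x‖ ^ 2 := by
  have h1x : 1 / 2 ≤ ‖1 + x‖ := by
    have := norm_sub_norm_le (1 : 𝕜) (-x)
    rw [sub_neg_eq_add, norm_one, norm_neg] at this
    linarith
  have hne : 1 + x ≠ 0 := norm_pos_iff.mp (by linarith)
  rw [show (1 + x)⁻¹ - (1 - x) = x ^ 2 / (1 + x) by field_simp; ring, norm_div, norm_pow,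
    div_le_iff₀ (by linarith)]
  nlinarith [sq_nonneg ‖x‖]

theorem Finset.norm_prod_inv_one_add_sub_one_sub_sum_le {𝕜 : Type*} [NormedField 𝕜]
    (t : Finset ι) (f : ι → 𝕜) (hf : ∑ i ∈ t, ‖f i‖ ≤ 1 / 4) :
    ‖∏ i ∈ t, (1 + f i)⁻¹ - (1 - ∑ i ∈ t, f i)‖ ≤ 9 * (∑ i ∈ t, ‖f i‖) ^ 2 := by
  set S := ∑ i ∈ t, ‖f i‖
  set x := ∏ i ∈ t, (1 + f i) - 1
  have hS : 0 ≤ S := sum_nonneg fun i _ ↦ norm_nonneg _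
  have hexp : Real.exp S - 1 - S ≤ S ^ 2 :=
    (le_abs_self _).trans (Real.abs_exp_sub_one_sub_id_le (by rw [abs_of_nonneg hS]; linarith))
  have hx : ‖x‖ ≤ 2 * S := by nlinarith [t.norm_prod_one_add_sub_one_le f]
  have hx_sum : ‖x - ∑ i ∈ t, f i‖ ≤ S ^ 2 :=
    (t.norm_prod_one_add_sub_one_sub_sum_le f).trans hexp
  rw [prod_inv_distrib, show ∏ i ∈ t, (1 + f i) = 1 + x by ring,
    show (1 + x)⁻¹ - (1 - ∑ i ∈ t, f i) = ((1 + x)⁻¹ - (1 - x)) - (x - ∑ i ∈ t, f i) by ring]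
  grw [norm_sub_le, norm_inv_one_add_sub_one_sub_le (by linarith), hx, hx_sum]
  nlinarith

end ProductExpansion

theorem harmonic_nonneg (m : ℕ) : 0 ≤ harmonic m :=
  sum_nonneg fun _ _ ↦ by positivity

theorem harmonic_le_self (m : ℕ) : harmonic m ≤ m := by
  induction m with
  | zero => simp
  | succ m ih =>
    rw [harmonic_succ, Nat.cast_succ]
    gcongr
    exact inv_le_one_of_one_le₀ (by simp)

theorem abs_harmonic_pred_sub_log_sub_eulerMascheroniConstant_le {n : ℕ} (hn : 0 < n) :
    |(harmonic (n - 1) : ℝ) - Real.log n - Real.eulerMascheroniConstant| ≤ 1 / n := by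
  have hlow := Real.eulerMascheroniSeq_lt_eulerMascheroniConstant (n - 1)
  have hup := Real.eulerMascheroniConstant_lt_eulerMascheroniSeq' n
  obtain ⟨m, rfl⟩ := Nat.exists_eq_add_of_lt hn
  simp only [zero_add, add_tsub_cancel_right, Real.eulerMascheroniSeq, Real.eulerMascheroniSeq',
    Nat.add_one_ne_zero, if_false, harmonic_succ, one_div] at hlow hup ⊢
  push_cast at hlow hup ⊢
  rw [abs_le]
  constructor <;> linarith

theorem sum_Icc_inv_mul_sub {K : Type*} [Field K] [CharZero K] (n : ℕ) :
    ∑ k ∈ Icc 1 (n - 1), ((k : K) * (n - k))⁻¹ = 2 * harmonic (n - 1) / n := by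
  rcases Nat.eq_zero_or_pos n with rfl | hn
  · simp
  have hfrac : ∀ k ∈ Icc 1 (n - 1),
      ((k : K) * (n - k))⁻¹ = ((k : K)⁻¹ + ((n - k : ℕ) : K)⁻¹) / n := by
    intro k hk
    obtain ⟨hk1, hkn⟩ := mem_Icc.mp hk
    rw [Nat.cast_sub (by omega)]
    have : (k : K) ≠ 0 := by norm_cast; omega
    have : (n : K) - k ≠ 0 := by rw [sub_ne_zero]; norm_cast; omega
    have : (n : K) ≠ 0 := by norm_cast; omega
    field_simp
    ring
  have hreflect :
      ∑ k ∈ Icc 1 (n - 1), ((n - k : ℕ) : K)⁻¹ = ∑ k ∈ Icc 1 (n - 1), (k : K)⁻¹ := by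
    refine sum_nbij' (n - ·) (n - ·) ?_ ?_ ?_ ?_ ?_ <;> intro k hk <;>
      simp only [mem_Icc] at hk ⊢ <;> omega
  rw [sum_congr rfl hfrac, ← sum_div, sum_add_distrib, hreflect, harmonic_eq_sum_Icc]
  push_cast
  ring

theorem sum_Icc_div_four_mul_mul_sub {K : Type*} [Field K] [CharZero K] (z : K) (n : ℕ) :
    ∑ k ∈ Icc 1 (n - 1), z / (4 * k * (n - k)) = z * (harmonic (n - 1) / (2 * n)) := by
  simp_rw [div_eq_mul_inv z, mul_inv, ← mul_sum, mul_assoc (4 : K)⁻¹, ← mul_sum, ← mul_inv,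
    sum_Icc_inv_mul_sub]
  ring

theorem sum_Icc_norm_div_four_mul_mul_sub (z : ℂ) (n : ℕ) :
    ∑ k ∈ Icc 1 (n - 1), ‖z / (4 * k * (n - k))‖ = ‖z‖ * (harmonic (n - 1) / (2 * n)) := by
  rw [← sum_Icc_div_four_mul_mul_sub]
  refine sum_congr rfl fun k hk ↦ ?_
  have hkn : k ≤ n := by grind
  rw [← Nat.cast_sub hkn, ← Nat.cast_sub hkn, norm_div, norm_mul, norm_mul, Complex.norm_natCast,
    Complex.norm_natCast, Complex.norm_ofNat]

theorem norm_le_of_norm_sub_sq_div_two_mul_sq_le {a z : ℂ} {M : ℝ} (hM : 0 ≤ M) {n : ℕ}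
    (hn : 1 ≤ n) (hz : ‖z - a ^ 2 / (2 * (n : ℂ) ^ 2)‖ ≤ M / (n : ℝ) ^ 4) :
    ‖z‖ ≤ (‖a‖ ^ 2 / 2 + M) / n ^ 2 := by
  have hn4 : M / (n : ℝ) ^ 4 ≤ M / n ^ 2 := by
    gcongr
    · exact_mod_cast hn
    · norm_num
  have hc : ‖a ^ 2 / (2 * (n : ℂ) ^ 2)‖ = ‖a‖ ^ 2 / (2 * n ^ 2) := by
    rw [norm_div, norm_pow]
    norm_cast
  calc ‖z‖ ≤ ‖z - a ^ 2 / (2 * (n : ℂ) ^ 2)‖ + ‖a ^ 2 / (2 * (n : ℂ) ^ 2)‖ :=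
        norm_le_norm_sub_add _ _
    _ ≤ M / n ^ 2 + ‖a‖ ^ 2 / (2 * n ^ 2) := by rw [hc]; grw [hz, hn4]
    _ = (‖a‖ ^ 2 / 2 + M) / n ^ 2 := by field_simp; ring

theorem norm_one_sub_mul_harmonic_sub_le (a z : ℂ) {n : ℕ} (hn : 0 < n) :
    ‖(1 - z * (harmonic (n - 1) / (2 * n)))
        - (1 - a ^ 2 * (Real.log n : ℂ) / (4 * (n : ℂ) ^ 3)
          - a ^ 2 * (Real.eulerMascheroniConstant : ℂ) / (4 * (n : ℂ) ^ 3))‖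
      ≤ ‖z - a ^ 2 / (2 * (n : ℂ) ^ 2)‖ * (harmonic (n - 1) / (2 * n)) +
        ‖a‖ ^ 2 / (4 * n ^ 4) := by
  set H : ℝ := (harmonic (n - 1) : ℝ)
  have hn0 : (n : ℂ) ≠ 0 := by norm_cast; omega
  have hH : ((harmonic (n - 1) : ℚ) : ℂ) = H := by simp [H]
  have hnorm : ‖(4 * (n : ℂ) ^ 3)‖ = 4 * n ^ 3 := by norm_cast
  rw [hH, show (1 - z * (H / (2 * n))) - (1 - a ^ 2 * (Real.log n : ℂ) / (4 * (n : ℂ) ^ 3)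
          - a ^ 2 * (Real.eulerMascheroniConstant : ℂ) / (4 * (n : ℂ) ^ 3)) =
        -((z - a ^ 2 / (2 * (n : ℂ) ^ 2)) * ((H / (2 * n) : ℝ) : ℂ)
          + a ^ 2 * ((H - Real.log n - Real.eulerMascheroniConstant : ℝ) : ℂ) / (4 * (n : ℂ) ^ 3))
      by push_cast; field_simp; ring, norm_neg]
  grw [norm_add_le]
  rw [norm_mul, norm_div, norm_mul, Complex.norm_real, Complex.norm_real, norm_pow, hnorm,
    Real.norm_of_nonneg (div_nonneg (Rat.cast_nonneg.mpr (harmonic_nonneg _)) (by positivity)),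
    Real.norm_eq_abs]
  grw [abs_harmonic_pred_sub_log_sub_eulerMascheroniConstant_le hn]
  exact le_of_eq (by simp only [H]; field_simp)

theorem mathieu_stmt_14_general (a : ℂ) (M : ℝ) (hM : 0 < M) :
    ∃ C > (0 : ℝ), ∃ N : ℕ, ∀ n ≥ N, ∀ z : ℂ, ‖z - a ^ 2 / (2 * (n : ℂ) ^ 2)‖ ≤ M / (n : ℝ) ^ 4 →
      ‖(∏ k ∈ Finset.Icc 1 (n - 1), (1 + z / (4 * (k : ℂ) * ((n : ℂ) - (k : ℂ))))⁻¹)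
          - (1 - a ^ 2 * (Real.log n : ℂ) / (4 * (n : ℂ) ^ 3)
              - a ^ 2 * (Real.eulerMascheroniConstant : ℂ) / (4 * (n : ℂ) ^ 3))‖
        ≤ C / (n : ℝ) ^ 4 := by
  set K := ‖a‖ ^ 2 / 2 + M
  refine ⟨9 * K ^ 2 / 4 + M / 2 + ‖a‖ ^ 2 / 4, by positivity, max 1 ⌈2 * K⌉₊,
    fun n hn z hz ↦ ?_⟩
  have hn1 : 1 ≤ n := le_of_max_le_left hn
  have hnK : 2 * K ≤ (n : ℝ) ^ 2 := by
    have : (⌈2 * K⌉₊ : ℝ) ≤ n := by exact_mod_cast le_of_max_le_right hn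
    nlinarith [Nat.le_ceil (2 * K), (Nat.one_le_cast (α := ℝ)).mpr hn1]
  have hT0 : 0 ≤ (harmonic (n - 1) : ℝ) / (2 * n) :=
    div_nonneg (mod_cast harmonic_nonneg _) (by positivity)
  have hT : (harmonic (n - 1) : ℝ) / (2 * n) ≤ 1 / 2 := by
    have : (harmonic (n - 1) : ℝ) ≤ n := by exact_mod_cast (harmonic_le_self _).trans (by simp)
    rw [div_le_iff₀ (by positivity)]
    linarith
  have hS : ∑ k ∈ Icc 1 (n - 1), ‖z / (4 * (k : ℂ) * ((n : ℂ) - (k : ℂ)))‖ ≤ K / (2 * n ^ 2) := by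
    have hzK : ‖z‖ ≤ K / n ^ 2 := norm_le_of_norm_sub_sq_div_two_mul_sq_le hM.le hn1 hz
    rw [sum_Icc_norm_div_four_mul_mul_sub]
    grw [hzK, hT]
    exact le_of_eq (by field_simp)
  calc _ ≤ _ := norm_sub_le_norm_sub_add_norm_sub _
          (1 - ∑ k ∈ Icc 1 (n - 1), z / (4 * (k : ℂ) * ((n : ℂ) - (k : ℂ)))) _
    _ ≤ 9 * (K / (2 * n ^ 2)) ^ 2 + ((M / n ^ 4) * (1 / 2) + ‖a‖ ^ 2 / (4 * n ^ 4)) := by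
      gcongr
      · grw [norm_prod_inv_one_add_sub_one_sub_sum_le _ _ (hS.trans ?_), hS]
        rw [div_le_iff₀ (by positivity)]
        linarith
      · rw [sum_Icc_div_four_mul_mul_sub]
        grw [norm_one_sub_mul_harmonic_sub_le a z hn1, hz, hT]
    _ = _ := by field_simp; ring

/-- For every `M > 0` there are `C > 0` and `N` such that for all `n ≥ N` and all `z ∈ ℂ`
with `|z - a²/(2n²)| ≤ M/n⁴`,
`|∏_{k=1}^{n-1} (1 + z/(4k(n-k)))⁻¹ - (1 - a² log n/(4n³) - a² γ/(4n³))| ≤ C/n⁴`,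
where `γ` is the Euler–Mascheroni constant. -/
theorem mathieu_stmt_14 (a : ℂ) (ha : a ≠ 0) (M : ℝ) (hM : 0 < M) :
    ∃ C > (0 : ℝ), ∃ N : ℕ, ∀ n ≥ N, ∀ z : ℂ, ‖z - a ^ 2 / (2 * (n : ℂ) ^ 2)‖ ≤ M / (n : ℝ) ^ 4 →
      ‖(∏ k ∈ Finset.Icc 1 (n - 1), (1 + z / (4 * (k : ℂ) * ((n : ℂ) - (k : ℂ))))⁻¹)
          - (1 - a ^ 2 * (Real.log n : ℂ) / (4 * (n : ℂ) ^ 3)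
              - a ^ 2 * (Real.eulerMascheroniConstant : ℂ) / (4 * (n : ℂ) ^ 3))‖
        ≤ C / (n : ℝ) ^ 4 :=
  mathieu_stmt_14_general a M hM
end

section
/- Let a ∈ ℂ, a ≠ 0. There exist a constant C > 0 and an integer N such that for all n ≥ N, |∑_{k=2}^{n−1} a²/(16(k−1)k(n−k)(n+1−k)) − (a²/(8n²) + a²·log n/(4n³) + a²·(γ−1)/(4n³))| ≤ C/n⁴. -/
/-!
Partial fractions write the summand as a combination of `1/(k-1)`, `1/k`, `1/(n-k)` and
`1/(n+1-k)`, and the reflection `k ↦ n+1-k` turns each of these sums into a harmonic number.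
This gives the closed form `a² (2 H_{n-2} + n - 2) / (8 n (n² - 1))` for the sum, and inserting
`H_{n-2} = log n + γ + O(1/n)` yields the expansion with an error `O(n⁻⁴)`.
-/

open Complex Finset

theorem sum_Icc_reflect {M : Type*} [AddCommMonoid M] (f : ℕ → M) (a b : ℕ) :
    ∑ k ∈ Icc a b, f (a + b - k) = ∑ k ∈ Icc a b, f k := by
  refine sum_nbij' (fun k ↦ a + b - k) (fun k ↦ a + b - k) ?_ ?_ ?_ ?_ fun _ _ ↦ rfl <;>
    intro k hk <;> simp only [mem_Icc] at hk ⊢ <;> omega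

theorem sum_Icc_reflect_cast {R M : Type*} [AddGroupWithOne R] [AddCommMonoid M] (g : R → M)
    (a b : ℕ) : ∑ k ∈ Icc a b, g (a + b - k) = ∑ k ∈ Icc a b, g k := by
  rw [← sum_Icc_reflect (fun k ↦ g k)]
  refine sum_congr rfl fun k hk ↦ ?_
  rw [mem_Icc] at hk
  rw [Nat.cast_sub (by omega), Nat.cast_add]

theorem sum_Icc_two_inv_sub_one (m : ℕ) :
    ∑ k ∈ Icc 2 (m + 1), ((k : ℝ) - 1)⁻¹ = harmonic m := by
  rw [harmonic_eq_sum_Icc, ← map_add_right_Icc 1 m 1, sum_map]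
  push_cast
  simp

theorem sum_Icc_two_inv (m : ℕ) :
    ∑ k ∈ Icc 2 (m + 1), (k : ℝ)⁻¹ = harmonic (m + 1) - 1 := by
  rw [harmonic_eq_sum_Icc, ← insert_Icc_add_one_left_eq_Icc (by omega : 1 ≤ m + 1),
    sum_insert (by simp)]
  push_cast
  ring

theorem inv_prod_eq_partial_fractions {K : Type*} [Field K] {x y : K}
    (h₁ : x - 1 ≠ 0) (h₂ : x ≠ 0) (h₃ : y - x ≠ 0) (h₄ : y + 1 - x ≠ 0)
    (h₅ : y ≠ 0) (h₆ : y - 1 ≠ 0) (h₇ : y + 1 ≠ 0) :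
    ((x - 1) * x * (y - x) * (y + 1 - x))⁻¹
      = (((x - 1)⁻¹ + (y - x)⁻¹) / (y - 1) - (x⁻¹ + (y + 1 - x)⁻¹) / (y + 1)) / y := by
  field_simp
  ring

noncomputable def reciprocalProductSum (n : ℕ) : ℝ :=
  ∑ k ∈ Icc 2 (n - 1), (((k : ℝ) - 1) * k * (n - k) * (n + 1 - k))⁻¹

theorem reciprocalProductSum_add_two (m : ℕ) :
    reciprocalProductSum (m + 2) = 2 * (2 * harmonic m + m) / ((m + 2) * (m + 1) * (m + 3)) := by
  have hsum_sub_one := sum_Icc_two_inv_sub_one m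
  have hsum := sum_Icc_two_inv m
  have hsum_reflect_sub_one : ∑ k ∈ Icc 2 (m + 1), ((m : ℝ) + 2 - k)⁻¹ = harmonic m := by
    rw [← hsum_sub_one, ← sum_Icc_reflect_cast (fun y : ℝ ↦ (y - 1)⁻¹)]
    push_cast
    ring_nf
  have hsum_reflect :
      ∑ k ∈ Icc 2 (m + 1), ((m : ℝ) + 2 + 1 - k)⁻¹ = harmonic (m + 1) - 1 := by
    rw [← hsum, ← sum_Icc_reflect_cast (fun y : ℝ ↦ y⁻¹)]
    push_cast
    ring_nf
  have hpartial : ∀ k ∈ Icc 2 (m + 1),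
      (((k : ℝ) - 1) * k * ((m + 2) - k) * ((m + 2) + 1 - k))⁻¹
        = ((((k : ℝ) - 1)⁻¹ + ((m : ℝ) + 2 - k)⁻¹) / ((m + 2) - 1)
          - ((k : ℝ)⁻¹ + ((m : ℝ) + 2 + 1 - k)⁻¹) / ((m + 2) + 1)) / (m + 2) := by
    intro k hk
    have hk' : (2 : ℝ) ≤ k ∧ (k : ℝ) ≤ m + 1 := by
      rw [mem_Icc] at hk
      exact ⟨by exact_mod_cast hk.1, by exact_mod_cast hk.2⟩
    apply inv_prod_eq_partial_fractions <;> linarith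
  rw [reciprocalProductSum, show m + 2 - 1 = m + 1 by omega]
  push_cast
  rw [sum_congr rfl hpartial]
  simp only [← sum_div, sum_sub_distrib, sum_add_distrib, hsum_sub_one, hsum, hsum_reflect,
    hsum_reflect_sub_one, harmonic_succ]
  push_cast
  rw [show (m : ℝ) + 2 - 1 = m + 1 by ring, show (m : ℝ) + 2 + 1 = m + 3 by ring]
  field_simp
  ring

theorem Real.log_add_sub_log_le {y t : ℝ} (hy : 0 < y) (hyt : 0 < y + t) :
    Real.log (y + t) - Real.log y ≤ t / y := by
  rw [← Real.log_div hyt.ne' hy.ne']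
  calc Real.log ((y + t) / y) ≤ (y + t) / y - 1 := Real.log_le_sub_one_of_pos (by positivity)
    _ = t / y := by field_simp; ring

theorem abs_harmonic_sub_log_sub_eulerMascheroniConstant_le {m : ℕ} (hm : 1 ≤ m) :
    |harmonic m - Real.log m - Real.eulerMascheroniConstant| ≤ 1 / m := by
  have hupper := Real.eulerMascheroniSeq_lt_eulerMascheroniConstant m
  have hlower := Real.eulerMascheroniConstant_lt_eulerMascheroniSeq' m
  rw [Real.eulerMascheroniSeq] at hupper
  rw [Real.eulerMascheroniSeq', if_neg (by omega)] at hlower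
  have hm' : (0 : ℝ) < m := by exact_mod_cast hm
  have hlog := Real.log_add_sub_log_le hm' (t := 1) (by linarith)
  rw [abs_le]
  constructor <;> linarith [one_div_pos.2 hm']

theorem abs_closedForm_sub_expansion_le {x h L g : ℝ} (hx : 4 ≤ x) (hD : |h - L - g| ≤ 6 / x)
    (hL₀ : 0 ≤ L) (hL₁ : L ≤ x - 1) (hg₀ : 0 ≤ g) (hg₁ : g ≤ 1) :
    |(2 * h + x - 2) / (8 * x * (x ^ 2 - 1))
        - (1 / (8 * x ^ 2) + L / (4 * x ^ 3) + (g - 1) / (4 * x ^ 3))| ≤ 4 / x ^ 4 := by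
  have hx₀ : 0 < x := by linarith
  have hx₂ : 0 < x ^ 2 - 1 := by nlinarith
  have hden : 0 < 8 * x ^ 3 * (x ^ 2 - 1) := by positivity
  have hsplit : (2 * h + x - 2) / (8 * x * (x ^ 2 - 1))
        - (1 / (8 * x ^ 2) + L / (4 * x ^ 3) + (g - 1) / (4 * x ^ 3))
      = (2 * (h - L - g) * x ^ 2 + (x + 2 * L + 2 * g - 2)) / (8 * x ^ 3 * (x ^ 2 - 1)) := by
    have := hx₂.ne'
    field_simp
    ring
  have hmain : |2 * (h - L - g) * x ^ 2| ≤ 12 * x := by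
    rw [abs_mul, abs_mul, abs_of_pos (by positivity : (0 : ℝ) < x ^ 2)]
    calc |2| * |h - L - g| * x ^ 2 ≤ 2 * (6 / x) * x ^ 2 := by norm_num; gcongr
      _ = 12 * x := by field_simp; ring
  have hrest : |x + 2 * L + 2 * g - 2| ≤ 3 * x := abs_le.2 ⟨by linarith, by linarith⟩
  have hnum := (abs_add_le _ _).trans (add_le_add hmain hrest)
  rw [hsplit, abs_div, abs_of_pos hden, div_le_div_iff₀ hden (by positivity)]
  nlinarith [pow_pos hx₀ 3, pow_pos hx₀ 4, mul_le_mul_of_nonneg_right hnum (pow_pos hx₀ 4).le]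

theorem abs_reciprocalProductSum_sub_le {n : ℕ} (hn : 4 ≤ n) :
    |reciprocalProductSum n / 16 - (1 / (8 * (n : ℝ) ^ 2) + Real.log n / (4 * (n : ℝ) ^ 3)
      + (Real.eulerMascheroniConstant - 1) / (4 * (n : ℝ) ^ 3))| ≤ 4 / (n : ℝ) ^ 4 := by
  obtain ⟨m, rfl⟩ : ∃ m, n = m + 2 := ⟨n - 2, by omega⟩
  have hm : (2 : ℝ) ≤ m := by exact_mod_cast (by omega : 2 ≤ m)
  have hm₀ : (0 : ℝ) < m := by linarith
  have hharmonic : |(harmonic m : ℝ) - Real.log (m + 2) - Real.eulerMascheroniConstant|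
      ≤ 6 / (m + 2) := by
    have hgamma := abs_harmonic_sub_log_sub_eulerMascheroniConstant_le (m := m) (by omega)
    have hlog := Real.log_add_sub_log_le hm₀ (t := 2) (by linarith)
    have hlog_mono := Real.log_le_log hm₀ (by linarith : (m : ℝ) ≤ m + 2)
    have hthree : 1 / (m : ℝ) + 2 / m ≤ 6 / (m + 2) := by
      rw [← add_div, div_le_div_iff₀ hm₀ (by linarith)]
      linarith
    have htwo : 0 < 2 / (m : ℝ) := by positivity
    rw [abs_le] at hgamma ⊢
    constructor <;> linarith
  have hclosed : reciprocalProductSum (m + 2) / 16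
      = (2 * harmonic m + ((m : ℝ) + 2) - 2) / (8 * (m + 2) * ((m + 2) ^ 2 - 1)) := by
    rw [reciprocalProductSum_add_two]
    have : ((m : ℝ) + 2) ^ 2 - 1 ≠ 0 := by nlinarith
    field_simp
    ring
  push_cast
  rw [hclosed]
  exact abs_closedForm_sub_expansion_le (by linarith) hharmonic (Real.log_nonneg (by linarith))
    (Real.log_le_sub_one_of_pos (by linarith))
    (by linarith [Real.one_half_lt_eulerMascheroniConstant])
    (by linarith [Real.eulerMascheroniConstant_lt_two_thirds])

theorem mathieu_stmt_16_general (a : ℂ) :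
    ∃ C > (0 : ℝ), ∃ N : ℕ, ∀ n ≥ N,
      ‖(∑ k ∈ Finset.Icc 2 (n - 1),
            a ^ 2 / (16 * ((k : ℂ) - 1) * (k : ℂ) * ((n : ℂ) - (k : ℂ)) * ((n : ℂ) + 1 - (k : ℂ))))
          - (a ^ 2 / (8 * (n : ℂ) ^ 2) + a ^ 2 * (Real.log n : ℂ) / (4 * (n : ℂ) ^ 3)
              + a ^ 2 * ((Real.eulerMascheroniConstant : ℂ) - 1) / (4 * (n : ℂ) ^ 3))‖
        ≤ C / (n : ℝ) ^ 4 := by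
  refine ⟨4 * (‖a‖ ^ 2 + 1), by positivity, 4, fun n hn ↦ ?_⟩
  calc _ = ‖a ^ 2 * ((reciprocalProductSum n / 16 - (1 / (8 * (n : ℝ) ^ 2)
          + Real.log n / (4 * (n : ℝ) ^ 3)
          + (Real.eulerMascheroniConstant - 1) / (4 * (n : ℝ) ^ 3)) : ℝ) : ℂ)‖ := by
        rw [reciprocalProductSum]
        push_cast
        rw [sum_div, mul_sub (a ^ 2) (∑ _ ∈ _, _), mul_sum]
        congr 2
        · exact sum_congr rfl fun k _ ↦ by simp only [div_eq_mul_inv, mul_inv]; ring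
        · ring
    _ ≤ ‖a‖ ^ 2 * (4 / (n : ℝ) ^ 4) := by
        rw [norm_mul, norm_pow, norm_real, Real.norm_eq_abs]
        gcongr
        exact abs_reciprocalProductSum_sub_le hn
    _ ≤ 4 * (‖a‖ ^ 2 + 1) / (n : ℝ) ^ 4 := by
        rw [mul_div_assoc', mul_comm]
        gcongr
        linarith

/-- There are `C > 0` and `N` such that for all `n ≥ N`,
`|∑_{k=2}^{n-1} a²/(16(k-1)k(n-k)(n+1-k)) - (a²/(8n²) + a² log n/(4n³) + a²(γ-1)/(4n³))| ≤ C/n⁴`,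
where `γ` is the Euler–Mascheroni constant. -/
theorem mathieu_stmt_16 (a : ℂ) (ha : a ≠ 0) :
    ∃ C > (0 : ℝ), ∃ N : ℕ, ∀ n ≥ N,
      ‖(∑ k ∈ Finset.Icc 2 (n - 1),
            a ^ 2 / (16 * ((k : ℂ) - 1) * (k : ℂ) * ((n : ℂ) - (k : ℂ)) * ((n : ℂ) + 1 - (k : ℂ))))
          - (a ^ 2 / (8 * (n : ℂ) ^ 2) + a ^ 2 * (Real.log n : ℂ) / (4 * (n : ℂ) ^ 3)
              + a ^ 2 * ((Real.eulerMascheroniConstant : ℂ) - 1) / (4 * (n : ℂ) ^ 3))‖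
        ≤ C / (n : ℝ) ^ 4 :=
  mathieu_stmt_16_general a
end

section
/- Let a ∈ ℂ, a ≠ 0. For every M > 0 there exist a constant C > 0 and an integer N such that for all n ≥ N and all z ∈ ℂ with |z| ≤ M/n², one has |Φ(n,z) − Φ(n,0)| ≤ C/n⁴ and also |∑_{k=2}^{n−1} |a|²/( |n²−(−n+2k)²+z|·|n²−(−n+2k−2)²+z| ) − ∑_{k=2}^{n−1} |a|²/(16(k−1)k(n−k)(n+1−k))| ≤ C/n⁴. -/
/-!
With `p = n² - (-n + 2k)² = 4k(n - k)` and `q = n² - (-n + 2k - 2)² = 4(k - 1)(n + 1 - k)`,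
both `p` and `q` lie in `[2n, n²]` for `2 ≤ k ≤ n - 1`. Replacing `(p + z)(q + z)` by `pq` changes
it by `z(p + q + z) = O(M)`, while `|(p + z)(q + z)| ≥ pq/2`; so every summand of either sum moves
by `O(M|a|²/(pq)²)`. Since `p ≥ 2n`, and `1/(uv) = (1/u + 1/v)/n` for `u = k - 1`, `v = n + 1 - k`,
the sum of `1/(pq)²` is at most `(64n²)⁻¹ · ∑ 1/(uv)² ≤ (64n²)⁻¹ · 8/n²`.
-/

/-- `Φ(n,z) = ∑_{k=2}^{n-1} a² / ((n²-(-n+2k)²+z)(n²-(-n+2k-2)²+z))`. -/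
noncomputable def PhiC (a : ℂ) (n : ℕ) (z : ℂ) : ℂ :=
  ∑ k ∈ Finset.Icc 2 (n - 1),
    a ^ 2 / (((n : ℂ) ^ 2 - (-(n : ℂ) + 2 * (k : ℂ)) ^ 2 + z) *
      ((n : ℂ) ^ 2 - (-(n : ℂ) + 2 * (k : ℂ) - 2) ^ 2 + z))

open Finset

section NormedField

variable {𝕜 : Type*} [NormedField 𝕜]

lemma norm_div_sub_div (c : 𝕜) {v w : 𝕜} (hv : v ≠ 0) (hw : w ≠ 0) :
    ‖c / w - c / v‖ = ‖c‖ * ‖w - v‖ / (‖w‖ * ‖v‖) := by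
  have h : c / w - c / v = c * (v - w) / (w * v) := by field_simp
  rw [h, norm_div, norm_mul, norm_mul, norm_sub_rev]

lemma abs_div_norm_sub_div_norm_le {r : ℝ} (hr : 0 ≤ r) {v w : 𝕜} (hv : v ≠ 0) (hw : w ≠ 0) :
    |r / ‖w‖ - r / ‖v‖| ≤ r * ‖w - v‖ / (‖w‖ * ‖v‖) := by
  have hv' : 0 < ‖v‖ := norm_pos_iff.mpr hv
  have hw' : 0 < ‖w‖ := norm_pos_iff.mpr hw
  have h : r / ‖w‖ - r / ‖v‖ = r * (‖v‖ - ‖w‖) / (‖w‖ * ‖v‖) := by field_simp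
  rw [h, abs_div, abs_of_pos (by positivity : 0 < ‖w‖ * ‖v‖), abs_mul, abs_of_nonneg hr,
    abs_sub_comm]
  gcongr
  exact abs_norm_sub_norm_le w v

lemma norm_add_mul_add_sub_mul_le (P Q z : 𝕜) :
    ‖(P + z) * (Q + z) - P * Q‖ ≤ ‖z‖ * (‖P‖ + ‖Q‖ + ‖z‖) := by
  have h : (P + z) * (Q + z) - P * Q = z * (P + Q + z) := by ring
  rw [h, norm_mul]
  gcongr
  exact (norm_add₃_le ..)

lemma norm_mul_le_two_mul_norm_add_mul_add {P Q z : 𝕜} (hP : 4 ≤ ‖P‖) (hQ : 4 ≤ ‖Q‖)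
    (hz : ‖z‖ ≤ 1) : ‖P‖ * ‖Q‖ ≤ 2 * ‖(P + z) * (Q + z)‖ := by
  have hPz : ‖P‖ - 1 ≤ ‖P + z‖ := by
    have := norm_sub_norm_le P (-z); rw [sub_neg_eq_add, norm_neg] at this; linarith
  have hQz : ‖Q‖ - 1 ≤ ‖Q + z‖ := by
    have := norm_sub_norm_le Q (-z); rw [sub_neg_eq_add, norm_neg] at this; linarith
  rw [norm_mul]
  nlinarith [mul_le_mul hPz hQz (by linarith) (norm_nonneg _)]

lemma div_add_mul_add_sub_div_mul_le (c : 𝕜) {P Q z : 𝕜} {E : ℝ} (hP : 4 ≤ ‖P‖) (hQ : 4 ≤ ‖Q‖)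
    (hz : ‖z‖ ≤ 1) (hE : ‖z‖ * (‖P‖ + ‖Q‖ + 1) ≤ E) :
    ‖c / ((P + z) * (Q + z)) - c / (P * Q)‖ ≤ 2 * ‖c‖ * E / (‖P‖ * ‖Q‖) ^ 2 ∧
      |‖c‖ / (‖P + z‖ * ‖Q + z‖) - ‖c‖ / (‖P‖ * ‖Q‖)| ≤ 2 * ‖c‖ * E / (‖P‖ * ‖Q‖) ^ 2 := by
  have hPQ : 0 < ‖P‖ * ‖Q‖ := by positivity
  have hlow := norm_mul_le_two_mul_norm_add_mul_add hP hQ hz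
  have hw : (P + z) * (Q + z) ≠ 0 := norm_pos_iff.mp (by linarith)
  have hv : P * Q ≠ 0 := norm_pos_iff.mp (by rwa [norm_mul])
  have hdiff : ‖(P + z) * (Q + z) - P * Q‖ ≤ E :=
    (norm_add_mul_add_sub_mul_le P Q z).trans (le_trans (by gcongr) hE)
  have key : ‖c‖ * ‖(P + z) * (Q + z) - P * Q‖ / (‖(P + z) * (Q + z)‖ * ‖P * Q‖)
      ≤ 2 * ‖c‖ * E / (‖P‖ * ‖Q‖) ^ 2 := by
    rw [norm_mul P Q, div_le_div_iff₀ (by positivity) (by positivity)]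
    have hE0 : 0 ≤ E := (norm_nonneg _).trans hdiff
    calc ‖c‖ * ‖(P + z) * (Q + z) - P * Q‖ * (‖P‖ * ‖Q‖) ^ 2
        ≤ ‖c‖ * E * (‖P‖ * ‖Q‖) ^ 2 := by gcongr
      _ = ‖c‖ * E * (‖P‖ * ‖Q‖) * (‖P‖ * ‖Q‖) := by ring
      _ ≤ ‖c‖ * E * (2 * ‖(P + z) * (Q + z)‖) * (‖P‖ * ‖Q‖) := by gcongr
      _ = 2 * ‖c‖ * E * (‖(P + z) * (Q + z)‖ * (‖P‖ * ‖Q‖)) := by ring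
  refine ⟨(norm_div_sub_div c hv hw).trans_le key, ?_⟩
  simpa only [norm_mul] using (abs_div_norm_sub_div_norm_le (norm_nonneg c) hv hw).trans key

end NormedField

lemma four_mul_mul_sub_le_sq (n j : ℝ) : 4 * j * (n - j) ≤ n ^ 2 := by
  nlinarith [sq_nonneg (n - 2 * j)]

lemma two_mul_le_four_mul_mul_sub {n j : ℝ} (hj : 1 ≤ j) (hjn : j + 1 ≤ n) :
    2 * n ≤ 4 * j * (n - j) := by
  nlinarith

lemma norm_sq_sub_sq_left {n k : ℕ} (hk : k ≤ n) :
    ‖(n : ℂ) ^ 2 - (-(n : ℂ) + 2 * (k : ℂ)) ^ 2‖ = 4 * k * (n - k) := by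
  have hkn : (k : ℝ) ≤ n := by exact_mod_cast hk
  have h : (n : ℂ) ^ 2 - (-(n : ℂ) + 2 * (k : ℂ)) ^ 2 = ((4 * k * (n - k) : ℝ) : ℂ) := by
    push_cast; ring
  rw [h, Complex.norm_of_nonneg (by nlinarith)]

lemma norm_sq_sub_sq_right {n k : ℕ} (hk : 1 ≤ k) (hkn : k ≤ n + 1) :
    ‖(n : ℂ) ^ 2 - (-(n : ℂ) + 2 * (k : ℂ) - 2) ^ 2‖ = 4 * (k - 1) * (n + 1 - k) := by
  have hk' : (1 : ℝ) ≤ k := by exact_mod_cast hk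
  have hkn' : (k : ℝ) ≤ n + 1 := by exact_mod_cast hkn
  have h : (n : ℂ) ^ 2 - (-(n : ℂ) + 2 * (k : ℂ) - 2) ^ 2
      = ((4 * (k - 1) * (n + 1 - k) : ℝ) : ℂ) := by
    push_cast; ring
  rw [h, Complex.norm_of_nonneg (by nlinarith)]

lemma sum_inv_sq_le_two {t : Finset ℕ} (ht : 0 ∉ t) : ∑ i ∈ t, ((i : ℝ) ^ 2)⁻¹ ≤ 2 := by
  have hsub : t ⊆ Ioo 0 (t.sup id + 1) := fun i hi =>
    mem_Ioo.mpr ⟨Nat.pos_of_ne_zero (ne_of_mem_of_not_mem hi ht),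
      Nat.lt_succ_of_le (le_sup (f := id) hi)⟩
  calc ∑ i ∈ t, ((i : ℝ) ^ 2)⁻¹ ≤ ∑ i ∈ Ioo 0 (t.sup id + 1), ((i : ℝ) ^ 2)⁻¹ :=
        sum_le_sum_of_subset_of_nonneg hsub fun _ _ _ => by positivity
    _ ≤ 2 := by simpa using sum_Ioo_inv_sq_le (α := ℝ) 0 (t.sup id + 1)

lemma sum_inv_sq_comp_le_two {s : Finset ℕ} {g : ℕ → ℕ} (hg : Set.InjOn g s)
    (h0 : ∀ k ∈ s, g k ≠ 0) : ∑ k ∈ s, ((g k : ℝ) ^ 2)⁻¹ ≤ 2 := by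
  rw [← sum_image (f := fun i : ℕ => ((i : ℝ) ^ 2)⁻¹) hg]
  exact sum_inv_sq_le_two fun h => by
    obtain ⟨k, hk, hgk⟩ := mem_image.mp h
    exact h0 k hk hgk

lemma inv_mul_sq_le {u v : ℝ} (hu : 0 < u) (hv : 0 < v) :
    ((u * v) ^ 2)⁻¹ ≤ 2 / (u + v) ^ 2 * ((u ^ 2)⁻¹ + (v ^ 2)⁻¹) := by
  have h : (u * v)⁻¹ = (u⁻¹ + v⁻¹) / (u + v) := by field_simp; ring
  rw [← inv_pow, h, div_pow, div_mul_eq_mul_div, mul_comm, ← inv_pow, ← inv_pow]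
  gcongr
  exact add_sq_le.trans_eq (mul_comm _ _)

lemma sum_inv_sq_mul_le (n : ℕ) :
    ∑ k ∈ Icc 2 (n - 1), ((((k : ℝ) - 1) * (n + 1 - k)) ^ 2)⁻¹ ≤ 8 / (n : ℝ) ^ 2 := by
  have hleft : ∑ k ∈ Icc 2 (n - 1), (((k : ℝ) - 1) ^ 2)⁻¹ ≤ 2 := by
    refine le_of_eq_of_le (sum_congr rfl fun k hk => ?_)
      (sum_inv_sq_comp_le_two (g := fun k => k - 1) ?_ ?_)
    · rw [mem_Icc] at hk
      rw [Nat.cast_sub (by omega : 1 ≤ k), Nat.cast_one]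
    · intro x hx y hy h
      simp only [coe_Icc, Set.mem_Icc] at hx hy h
      omega
    · intro k hk
      rw [mem_Icc] at hk
      omega
  have hright : ∑ k ∈ Icc 2 (n - 1), (((n : ℝ) + 1 - k) ^ 2)⁻¹ ≤ 2 := by
    refine le_of_eq_of_le (sum_congr rfl fun k hk => ?_)
      (sum_inv_sq_comp_le_two (g := fun k => n + 1 - k) ?_ ?_)
    · rw [mem_Icc] at hk
      rw [Nat.cast_sub (by omega : k ≤ n + 1), Nat.cast_add_one]
    · intro x hx y hy h
      simp only [coe_Icc, Set.mem_Icc] at hx hy h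
      omega
    · intro k hk
      rw [mem_Icc] at hk
      omega
  calc ∑ k ∈ Icc 2 (n - 1), ((((k : ℝ) - 1) * (n + 1 - k)) ^ 2)⁻¹
      ≤ ∑ k ∈ Icc 2 (n - 1),
          2 / (n : ℝ) ^ 2 * ((((k : ℝ) - 1) ^ 2)⁻¹ + (((n : ℝ) + 1 - k) ^ 2)⁻¹) := by
        refine sum_le_sum fun k hk => ?_
        rw [mem_Icc] at hk
        have hk1 : (2 : ℝ) ≤ k := by exact_mod_cast hk.1
        have hkn : (k : ℝ) + 1 ≤ n := by exact_mod_cast (by omega : k + 1 ≤ n)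
        have h := inv_mul_sq_le (by linarith : (0 : ℝ) < k - 1) (by linarith : (0 : ℝ) < n + 1 - k)
        rwa [sub_add_sub_cancel', add_sub_cancel_right] at h
    _ = 2 / (n : ℝ) ^ 2 * (∑ k ∈ Icc 2 (n - 1), (((k : ℝ) - 1) ^ 2)⁻¹
          + ∑ k ∈ Icc 2 (n - 1), (((n : ℝ) + 1 - k) ^ 2)⁻¹) := by
        rw [← mul_sum, sum_add_distrib]
    _ ≤ 2 / (n : ℝ) ^ 2 * (2 + 2) := by gcongr
    _ = 8 / (n : ℝ) ^ 2 := by ring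

lemma sum_inv_sq_quartic_le (n : ℕ) :
    ∑ k ∈ Icc 2 (n - 1), ((16 * ((k : ℝ) - 1) * k * (n - k) * (n + 1 - k)) ^ 2)⁻¹
      ≤ (8 * (n : ℝ) ^ 4)⁻¹ := by
  calc ∑ k ∈ Icc 2 (n - 1), ((16 * ((k : ℝ) - 1) * k * (n - k) * (n + 1 - k)) ^ 2)⁻¹
      ≤ ∑ k ∈ Icc 2 (n - 1), (64 * (n : ℝ) ^ 2)⁻¹ * ((((k : ℝ) - 1) * (n + 1 - k)) ^ 2)⁻¹ := by
        refine sum_le_sum fun k hk => ?_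
        rw [mem_Icc] at hk
        have hk1 : (2 : ℝ) ≤ k := by exact_mod_cast hk.1
        have hkn : (k : ℝ) + 1 ≤ n := by exact_mod_cast (by omega : k + 1 ≤ n)
        have hgap := two_mul_le_four_mul_mul_sub (by linarith : (1 : ℝ) ≤ k) hkn
        rw [← mul_inv]
        have hu : (0 : ℝ) < k - 1 := by linarith
        have hv : (0 : ℝ) < n + 1 - k := by linarith
        have hn : (0 : ℝ) < n := by linarith
        refine inv_anti₀ (by positivity) ?_
        calc 64 * (n : ℝ) ^ 2 * (((k : ℝ) - 1) * (n + 1 - k)) ^ 2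
            = (2 * n) ^ 2 * 16 * (((k : ℝ) - 1) * (n + 1 - k)) ^ 2 := by ring
          _ ≤ (4 * k * (n - k)) ^ 2 * 16 * (((k : ℝ) - 1) * (n + 1 - k)) ^ 2 := by gcongr
          _ = (16 * ((k : ℝ) - 1) * k * (n - k) * (n + 1 - k)) ^ 2 := by ring
    _ = (64 * (n : ℝ) ^ 2)⁻¹ * ∑ k ∈ Icc 2 (n - 1), ((((k : ℝ) - 1) * (n + 1 - k)) ^ 2)⁻¹ := by
        rw [mul_sum]
    _ ≤ (64 * (n : ℝ) ^ 2)⁻¹ * (8 / (n : ℝ) ^ 2) := by gcongr; exact sum_inv_sq_mul_le n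
    _ = (8 * (n : ℝ) ^ 4)⁻¹ := by
        rcases eq_or_ne (n : ℝ) 0 with hn | hn
        · simp [hn]
        · field_simp; ring

lemma phi_summand_bounds (a z : ℂ) {M : ℝ} {n k : ℕ} (hk : k ∈ Icc 2 (n - 1)) (hMn : M ≤ n)
    (hz : ‖z‖ ≤ M / (n : ℝ) ^ 2) :
    ‖a ^ 2 / (((n : ℂ) ^ 2 - (-(n : ℂ) + 2 * (k : ℂ)) ^ 2 + z) *
          ((n : ℂ) ^ 2 - (-(n : ℂ) + 2 * (k : ℂ) - 2) ^ 2 + z))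
        - a ^ 2 / (((n : ℂ) ^ 2 - (-(n : ℂ) + 2 * (k : ℂ)) ^ 2) *
          ((n : ℂ) ^ 2 - (-(n : ℂ) + 2 * (k : ℂ) - 2) ^ 2))‖
      ≤ 6 * M * ‖a‖ ^ 2 * ((16 * ((k : ℝ) - 1) * k * (n - k) * (n + 1 - k)) ^ 2)⁻¹ ∧
    |‖a‖ ^ 2 / (‖(n : ℂ) ^ 2 - (-(n : ℂ) + 2 * (k : ℂ)) ^ 2 + z‖ *
          ‖(n : ℂ) ^ 2 - (-(n : ℂ) + 2 * (k : ℂ) - 2) ^ 2 + z‖)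
        - ‖a‖ ^ 2 / (16 * ((k : ℝ) - 1) * k * (n - k) * (n + 1 - k))|
      ≤ 6 * M * ‖a‖ ^ 2 * ((16 * ((k : ℝ) - 1) * k * (n - k) * (n + 1 - k)) ^ 2)⁻¹ := by
  rw [mem_Icc] at hk
  have hk1 : (2 : ℝ) ≤ k := by exact_mod_cast hk.1
  have hkn : (k : ℝ) + 1 ≤ n := by exact_mod_cast (by omega : k + 1 ≤ n)
  set P := (n : ℂ) ^ 2 - (-(n : ℂ) + 2 * (k : ℂ)) ^ 2
  set Q := (n : ℂ) ^ 2 - (-(n : ℂ) + 2 * (k : ℂ) - 2) ^ 2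
  have hP : ‖P‖ = 4 * k * (n - k) := norm_sq_sub_sq_left (by omega)
  have hQ : ‖Q‖ = 4 * (k - 1) * (n - (k - 1)) := by
    rw [norm_sq_sub_sq_right (by omega) (by omega)]; ring
  have hPQ : ‖P‖ * ‖Q‖ = 16 * ((k : ℝ) - 1) * k * (n - k) * (n + 1 - k) := by
    rw [hP, hQ]; ring
  have hP4 : 4 ≤ ‖P‖ := by
    rw [hP]; linarith [two_mul_le_four_mul_mul_sub (by linarith : (1 : ℝ) ≤ k) hkn]
  have hQ4 : 4 ≤ ‖Q‖ := by
    rw [hQ]; linarith [two_mul_le_four_mul_mul_sub (by linarith : (1 : ℝ) ≤ k - 1)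
      (by linarith : (k : ℝ) - 1 + 1 ≤ n)]
  have hPn : ‖P‖ ≤ (n : ℝ) ^ 2 := hP ▸ four_mul_mul_sub_le_sq _ _
  have hQn : ‖Q‖ ≤ (n : ℝ) ^ 2 := hQ ▸ four_mul_mul_sub_le_sq _ _
  have hn2 : 1 ≤ (n : ℝ) ^ 2 := by nlinarith
  have hz1 : ‖z‖ ≤ 1 :=
    hz.trans ((div_le_one (by positivity)).mpr (by nlinarith))
  have hE : ‖z‖ * (‖P‖ + ‖Q‖ + 1) ≤ 3 * M := by
    have hMn2 : 0 ≤ M / (n : ℝ) ^ 2 := (norm_nonneg z).trans hz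
    have hn0 : (n : ℝ) ≠ 0 := (by linarith : (0 : ℝ) < n).ne'
    calc ‖z‖ * (‖P‖ + ‖Q‖ + 1) ≤ M / (n : ℝ) ^ 2 * (3 * (n : ℝ) ^ 2) := by
          gcongr; linarith
      _ = 3 * M := by field_simp
  obtain ⟨hdiv, hnorm⟩ := div_add_mul_add_sub_div_mul_le (a ^ 2) hP4 hQ4 hz1 hE
  have hbound : 2 * ‖a ^ 2‖ * (3 * M) / (‖P‖ * ‖Q‖) ^ 2
      = 6 * M * ‖a‖ ^ 2 * ((16 * ((k : ℝ) - 1) * k * (n - k) * (n + 1 - k)) ^ 2)⁻¹ := by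
    rw [hPQ, norm_pow]; ring
  refine ⟨hdiv.trans_eq hbound, ?_⟩
  have h := hnorm.trans_eq hbound
  rwa [norm_pow, hPQ] at h

theorem mathieu_stmt_17_general (a : ℂ) (M : ℝ) (hM : 0 < M) :
    ∃ C > (0 : ℝ), ∃ N : ℕ, ∀ n ≥ N, ∀ z : ℂ, ‖z‖ ≤ M / (n : ℝ) ^ 2 →
      ‖PhiC a n z - PhiC a n 0‖ ≤ C / (n : ℝ) ^ 4 ∧
      |(∑ k ∈ Finset.Icc 2 (n - 1),
            ‖a‖ ^ 2 / (‖(n : ℂ) ^ 2 - (-(n : ℂ) + 2 * (k : ℂ)) ^ 2 + z‖ *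
              ‖(n : ℂ) ^ 2 - (-(n : ℂ) + 2 * (k : ℂ) - 2) ^ 2 + z‖))
          - ∑ k ∈ Finset.Icc 2 (n - 1),
              ‖a‖ ^ 2 / (16 * ((k : ℝ) - 1) * (k : ℝ) * ((n : ℝ) - (k : ℝ)) *
                ((n : ℝ) + 1 - (k : ℝ)))|
        ≤ C / (n : ℝ) ^ 4 := by
  refine ⟨M * (‖a‖ ^ 2 + 1), by positivity, ⌈M⌉₊, fun n hn z hz => ?_⟩
  have hMn : M ≤ n := Nat.ceil_le.mp hn
  have hsum : ∑ k ∈ Icc 2 (n - 1),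
      6 * M * ‖a‖ ^ 2 * ((16 * ((k : ℝ) - 1) * k * (n - k) * (n + 1 - k)) ^ 2)⁻¹
        ≤ M * (‖a‖ ^ 2 + 1) / (n : ℝ) ^ 4 := by
    rw [← mul_sum]
    calc 6 * M * ‖a‖ ^ 2 * ∑ k ∈ Icc 2 (n - 1),
          ((16 * ((k : ℝ) - 1) * k * (n - k) * (n + 1 - k)) ^ 2)⁻¹
        ≤ 6 * M * ‖a‖ ^ 2 * (8 * (n : ℝ) ^ 4)⁻¹ := by gcongr; exact sum_inv_sq_quartic_le n
      _ = 3 / 4 * M * ‖a‖ ^ 2 / (n : ℝ) ^ 4 := by rw [mul_inv]; ring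
      _ ≤ M * (‖a‖ ^ 2 + 1) / (n : ℝ) ^ 4 :=
        div_le_div_of_nonneg_right (by nlinarith [sq_nonneg ‖a‖]) (by positivity)
  constructor
  · rw [← dist_eq_norm]
    refine (dist_sum_sum_le_of_le _ fun k hk => ?_).trans hsum
    simpa only [add_zero, dist_eq_norm] using (phi_summand_bounds a z hk hMn hz).1
  · rw [← Real.dist_eq]
    exact (dist_sum_sum_le_of_le _ fun k hk =>
      (Real.dist_eq _ _).trans_le (phi_summand_bounds a z hk hMn hz).2).trans hsum

/-- For every `M > 0` there are `C > 0` and `N` such that for all `n ≥ N` and `|z| ≤ M/n²`,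
both `|Φ(n,z) - Φ(n,0)| ≤ C/n⁴` and
`|∑_{k=2}^{n-1} |a|²/(|n²-(-n+2k)²+z||n²-(-n+2k-2)²+z|)
   - ∑_{k=2}^{n-1} |a|²/(16(k-1)k(n-k)(n+1-k))| ≤ C/n⁴`. -/
theorem mathieu_stmt_17 (a : ℂ) (ha : a ≠ 0) (M : ℝ) (hM : 0 < M) :
    ∃ C > (0 : ℝ), ∃ N : ℕ, ∀ n ≥ N, ∀ z : ℂ, ‖z‖ ≤ M / (n : ℝ) ^ 2 →
      ‖PhiC a n z - PhiC a n 0‖ ≤ C / (n : ℝ) ^ 4 ∧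
      |(∑ k ∈ Finset.Icc 2 (n - 1),
            ‖a‖ ^ 2 / (‖(n : ℂ) ^ 2 - (-(n : ℂ) + 2 * (k : ℂ)) ^ 2 + z‖ *
              ‖(n : ℂ) ^ 2 - (-(n : ℂ) + 2 * (k : ℂ) - 2) ^ 2 + z‖))
          - ∑ k ∈ Finset.Icc 2 (n - 1),
              ‖a‖ ^ 2 / (16 * ((k : ℝ) - 1) * (k : ℝ) * ((n : ℝ) - (k : ℝ)) *
                ((n : ℝ) + 1 - (k : ℝ)))|
        ≤ C / (n : ℝ) ^ 4 :=
  mathieu_stmt_17_general a M hM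
end
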